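/- arXiv:2410.07756 — 3 statements merged into one kernel-verified Lean document; each statement's English description precedes it below -/
import Mathlib

section
/- Every Hamiltonian graph is resistance positive: if a finite simple loopless graph G = (V, E) with |V| ≥ 3 contains a Hamiltonian cycle (a cycle passing through every vertex exactly once), then there exist edge weights 0 < c < ∞ such that the resistance curvature satisfies p_v(c) > 0 for all v ∈ V. -/
open scoped Classical

namespace RCurv

variable {V : Type*} [Fintype V] [DecidableEq V]

/-- `T` is (the edge set of) a spanning tree of `G`. -/
def IsSpanningTree (G : SimpleGraph V) (T : Finset (Sym2 V)) : Prop :=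
  (T : Set (Sym2 V)) ⊆ G.edgeSet ∧ (SimpleGraph.fromEdgeSet (T : Set (Sym2 V))).IsTree

/-- The finite set of all spanning trees of `G`. -/
noncomputable def spanningTrees (G : SimpleGraph V) : Finset (Finset (Sym2 V)) :=
  Finset.univ.filter fun T => IsSpanningTree G T

/-- The relative resistance `r_e(c)` of an edge `e`. -/
noncomputable def relRes (G : SimpleGraph V) (c : Sym2 V → ℝ) (e : Sym2 V) : ℝ :=
  (∑ T ∈ (spanningTrees G).filter (fun T => e ∈ T), ∏ t ∈ T, c t) /
    (∑ T ∈ spanningTrees G, ∏ t ∈ T, c t)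

/-- The resistance curvature `p_v(c)` of a vertex `v`. -/
noncomputable def curv (G : SimpleGraph V) (c : Sym2 V → ℝ) (v : V) : ℝ :=
  1 - (1 / 2) * ∑ u ∈ G.neighborFinset v, relRes G c s(u, v)

/-- `G` is resistance nonnegative. -/
def IsRN (G : SimpleGraph V) : Prop :=
  ∃ c : Sym2 V → ℝ, (∀ e ∈ G.edgeSet, 0 < c e) ∧ ∀ v : V, 0 ≤ curv G c v

/-- `G` is resistance positive. -/
def IsRP (G : SimpleGraph V) : Prop :=
  ∃ c : Sym2 V → ℝ, (∀ e ∈ G.edgeSet, 0 < c e) ∧ ∀ v : V, 0 < curv G c v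

/-- The indicator vector of a finite edge set, as a vector in `ℝ^{Sym2 V}`. -/
noncomputable def indVec (T : Finset (Sym2 V)) : Sym2 V → ℝ := fun e => if e ∈ T then 1 else 0

/-- The spanning tree polytope `P(G)`. -/
noncomputable def stPolytope (G : SimpleGraph V) : Set (Sym2 V → ℝ) :=
  convexHull ℝ {x | ∃ T ∈ spanningTrees G, x = indVec T}

/-- `M` is a matching of `G`. -/
def IsMatching' (G : SimpleGraph V) (M : Finset (Sym2 V)) : Prop :=
  (M : Set (Sym2 V)) ⊆ G.edgeSet ∧ ∀ v : V, (M.filter fun e => v ∈ e).card ≤ 1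

/-- The matching polytope `M(G)`. -/
noncomputable def matchingPolytope (G : SimpleGraph V) : Set (Sym2 V → ℝ) :=
  convexHull ℝ {x | ∃ M : Finset (Sym2 V), IsMatching' G M ∧ x = indVec M}

/-- A Hamiltonian path: a spanning tree in which every vertex has degree at most `2`. -/
def IsHamPath (G : SimpleGraph V) (H : Finset (Sym2 V)) : Prop :=
  IsSpanningTree G H ∧ ∀ v : V, (H.filter fun e => v ∈ e).card ≤ 2

end RCurv

namespace RCurvAux

open SimpleGraph

variable {V : Type*} [DecidableEq V] {G : SimpleGraph V}

lemma countP_edges_bound {x y : V} (w : G.Walk x y) (v : V) :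
    (w.edges.countP fun e => v ∈ e) + (if v = x then 1 else 0) + (if v = y then 1 else 0)
      ≤ 2 * w.support.count v := by
  induction w with
  | nil =>
    simp only [SimpleGraph.Walk.edges_nil, SimpleGraph.Walk.support_nil, List.countP_nil,
      List.count_cons, List.count_nil]
    split_ifs <;> simp_all
  | @cons a b c hadj w ih =>
    simp only [SimpleGraph.Walk.edges_cons, SimpleGraph.Walk.support_cons,
      List.countP_cons, List.count_cons]
    rcases eq_or_ne v a with rfl | ha <;> rcases eq_or_ne v b with rfl | hb <;>
      simp_all [Sym2.mem_iff, hadj.ne] <;> omega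

lemma acyclic_fromEdgeSet_path {x y : V} (w : G.Walk x y) (hw : w.IsPath) :
    (SimpleGraph.fromEdgeSet {e | e ∈ w.edges}).IsAcyclic := by
  induction w with
  | @nil u =>
    have h0 : {e | e ∈ (SimpleGraph.Walk.nil : G.Walk u u).edges} = (∅ : Set (Sym2 V)) := by
      simp
    rw [h0, fromEdgeSet_empty]
    exact SimpleGraph.isAcyclic_bot
  | @cons a b c hadj w ih =>
    rw [SimpleGraph.Walk.cons_isPath_iff] at hw
    intro z C hC
    by_cases hmem : s(a, b) ∈ C.edges
    · have haC : a ∈ C.support := C.fst_mem_support_of_mem_edges hmem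
      have heven : Even (C.edges.countP fun e => a ∈ e) := by
        rw [hC.isTrail.even_countP_edges_iff a]
        simp
      have hpos : 0 < C.edges.countP fun e => a ∈ e := by
        rw [List.countP_pos_iff]
        exact ⟨s(a, b), hmem, by simp⟩
      have h2 : 2 ≤ C.edges.countP fun e => a ∈ e := by
        rcases heven with ⟨k, hk⟩; omega
      have hsub : C.edges ⊆ s(a, b) :: w.edges := by
        intro e he
        have := C.edges_subset_edgeSet he
        rw [SimpleGraph.edgeSet_fromEdgeSet] at this
        exact this.1
      have hle : (C.edges.countP fun e => a ∈ e)
          ≤ ((s(a, b) :: w.edges).countP fun e => a ∈ e) :=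
        (hC.isTrail.edges_nodup.subperm hsub).countP_le _
      have hw0 : (w.edges.countP fun e => a ∈ e) = 0 := by
        have := countP_edges_bound w a
        have hns : a ∉ w.support := hw.2
        have : List.count a w.support = 0 := List.count_eq_zero_of_not_mem hns
        omega
      have hin : a ∈ s(a, b) := by simp
      rw [List.countP_cons] at hle
      simp only [hin, decide_true, if_pos] at hle
      omega
    · have hq : ∀ e ∈ C.edges, e ∈ (SimpleGraph.fromEdgeSet {e | e ∈ w.edges}).edgeSet := by
        intro e he
        have h1 := C.edges_subset_edgeSet he
        rw [SimpleGraph.edgeSet_fromEdgeSet] at h1 ⊢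
        refine ⟨?_, h1.2⟩
        have : e ∈ s(a, b) :: w.edges := h1.1
        rcases List.mem_cons.1 this with rfl | h
        · exact absurd he hmem
        · exact h
      exact ih hw.1 (C.transfer _ hq) (hC.transfer hq)

/-- The edge set of a Hamiltonian path is a spanning tree. -/
lemma isSpanningTree_of_hamPath [Fintype V] {x y : V} (w : G.Walk x y)
    (hw : w.IsPath) (hall : ∀ z : V, z ∈ w.support) :
    RCurv.IsSpanningTree G w.edges.toFinset := by
  have hedge : ∀ e ∈ w.edges, e ∈ (SimpleGraph.fromEdgeSet
      (↑w.edges.toFinset : Set (Sym2 V))).edgeSet := by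
    intro e he
    rw [SimpleGraph.edgeSet_fromEdgeSet]
    refine ⟨by simpa using he, ?_⟩
    exact G.not_isDiag_of_mem_edgeSet (w.edges_subset_edgeSet he)
  refine ⟨?_, ?_, ?_⟩
  · intro e he
    simp only [Finset.coe_sort_coe, Finset.mem_coe, List.mem_toFinset] at he
    exact w.edges_subset_edgeSet (by simpa using he)
  · -- connected
    rw [SimpleGraph.connected_iff]
    refine ⟨?_, ⟨x⟩⟩
    have hreach : ∀ z : V, (SimpleGraph.fromEdgeSet
        (↑w.edges.toFinset : Set (Sym2 V))).Reachable x z := by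
      intro z
      have hz := hall z
      exact ⟨(w.takeUntil z hz).transfer _ fun e he =>
        hedge e (w.edges_takeUntil_subset hz he)⟩
    intro u v
    exact (hreach u).symm.trans (hreach v)
  · -- acyclic
    have : (↑w.edges.toFinset : Set (Sym2 V)) = {e | e ∈ w.edges} := by
      ext e; simp
    rw [this]
    exact acyclic_fromEdgeSet_path w hw

/-- Rotating a Hamiltonian cycle gives a Hamiltonian cycle. -/
lemma hamCycle_rotate {v₀ : V} {p : G.Walk v₀ v₀} (hp : p.IsHamiltonianCycle) (v : V) :
    (p.rotate v (hp.mem_support v)).IsHamiltonianCycle := by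
  refine ⟨hp.isCycle.rotate _, ?_⟩
  intro a
  have hc : (p.rotate v (hp.mem_support v)).IsCycle := hp.isCycle.rotate _
  rw [SimpleGraph.Walk.support_tail_of_not_nil _ hc.not_nil]
  rw [((p.support_rotate v (hp.mem_support v)).perm).count_eq]
  rw [← SimpleGraph.Walk.support_tail_of_not_nil p hp.isCycle.not_nil]
  exact hp.isHamiltonian_tail a

end RCurvAux

open RCurv in
/-- Hamiltonian graphs are resistance positive: if `G` has a Hamiltonian cycle then it admits
edge weights with everywhere positive resistance curvature. -/
theorem isRP_of_hamiltonian {V : Type*} [Fintype V] [DecidableEq V]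
    (G : SimpleGraph V) (hcard : 3 ≤ Fintype.card V)
    (hham : ∃ (v : V) (p : G.Walk v v), p.IsHamiltonianCycle) :
    ∃ c : Sym2 V → ℝ, (∀ e ∈ G.edgeSet, 0 < c e) ∧ ∀ v : V, 0 < curv G c v := by
  classical
  obtain ⟨v₀, p, hp⟩ := hham
  set Ce : Finset (Sym2 V) := p.edges.toFinset with hCedef
  -- rotated Hamiltonian cycles with the same edge finset
  have hrot : ∀ v : V, ∃ q : G.Walk v v, q.IsHamiltonianCycle ∧ q.edges.toFinset = Ce := by
    intro v
    refine ⟨p.rotate v (hp.mem_support v), RCurvAux.hamCycle_rotate hp v, ?_⟩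
    ext e
    simp only [List.mem_toFinset, hCedef]
    exact (p.rotate_edges v (hp.mem_support v)).perm.mem_iff
  -- every vertex is incident to at most two edges of `Ce`
  have hCev : ∀ v : V, (Ce.filter fun e => v ∈ e).card ≤ 2 := by
    intro v
    obtain ⟨q, hq, hqe⟩ := hrot v
    have hnodup : q.edges.Nodup := hq.isCycle.isTrail.edges_nodup
    have hfil : (Ce.filter fun e => v ∈ e).card = q.edges.countP fun e => v ∈ e := by
      rw [← hqe, List.countP_eq_length_filter]
      have hxx : q.edges.toFinset.filter (fun e => v ∈ e)
          = (q.edges.filter fun e => decide (v ∈ e)).toFinset := by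
        ext a; simp [List.mem_filter]
      rw [hxx, List.toFinset_card_of_nodup (hnodup.filter _)]
    rw [hfil]
    have hcnt : q.support.count v = 2 := hq.count_support_self
    have := RCurvAux.countP_edges_bound q v
    rw [hcnt] at this
    norm_num at this
    omega
  -- for every vertex there is a spanning tree inside `Ce` using at most one edge at `v`
  have hgood : ∀ v : V, ∃ T ∈ spanningTrees G, T ⊆ Ce ∧ (T.filter fun e => v ∈ e).card ≤ 1 := by
    intro v
    obtain ⟨q, hq, hqe⟩ := hrot v
    have hnn : ¬ q.Nil := hq.isCycle.not_nil
    have htpath : q.tail.IsPath := hq.isHamiltonian_tail.isPath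
    have hall : ∀ z : V, z ∈ q.tail.support := hq.isHamiltonian_tail.mem_support
    have hst := RCurvAux.isSpanningTree_of_hamPath q.tail htpath hall
    refine ⟨q.tail.edges.toFinset, ?_, ?_, ?_⟩
    · simp only [spanningTrees, Finset.mem_filter, Finset.mem_univ, true_and]
      exact hst
    · -- subset of Ce
      intro e he
      rw [← hqe]
      simp only [List.mem_toFinset] at he ⊢
      have hq2 : q.edges = s(v, q.getVert 1) :: q.tail.edges := by
        conv_lhs => rw [← q.cons_tail_eq hnn]
        rfl
      rw [hq2]
      exact List.mem_cons_of_mem _ he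
    · -- at most one edge at v
      have hnodup : q.tail.edges.Nodup := htpath.isTrail.edges_nodup
      have hfil : (q.tail.edges.toFinset.filter fun e => v ∈ e).card
          = q.tail.edges.countP fun e => v ∈ e := by
        rw [List.countP_eq_length_filter]
        have hxx : q.tail.edges.toFinset.filter (fun e => v ∈ e)
            = (q.tail.edges.filter fun e => decide (v ∈ e)).toFinset := by
          ext a; simp [List.mem_filter]
        rw [hxx, List.toFinset_card_of_nodup (hnodup.filter _)]
      rw [hfil]
      have hcnt : q.tail.support.count v = 1 := hq.isHamiltonian_tail v
      have := RCurvAux.countP_edges_bound q.tail v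
      rw [hcnt] at this
      norm_num at this
      simp only [SimpleGraph.Walk.edges_tail] at this ⊢
      omega
  -- the family of weights
  set c : ℝ → Sym2 V → ℝ := fun ε e => if e ∈ Ce then 1 else ε with hcdef
  have hprod0 : ∀ T : Finset (Sym2 V), (∏ t ∈ T, c 0 t) = if T ⊆ Ce then 1 else 0 := by
    intro T
    by_cases h : T ⊆ Ce
    · rw [if_pos h]
      exact Finset.prod_eq_one fun t ht => by simp [hcdef, h ht]
    · rw [if_neg h]
      obtain ⟨t, htT, htC⟩ := Finset.not_subset.1 h
      exact Finset.prod_eq_zero htT (by simp [hcdef, htC])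
  set STC : Finset (Finset (Sym2 V)) := (spanningTrees G).filter (fun T => T ⊆ Ce) with hSTC
  have hSTCne : STC.Nonempty := by
    obtain ⟨T, hT, hTC, _⟩ := hgood v₀
    exact ⟨T, Finset.mem_filter.2 ⟨hT, hTC⟩⟩
  have hden0 : (∑ T ∈ spanningTrees G, ∏ t ∈ T, c 0 t) = (STC.card : ℝ) := by
    rw [Finset.sum_congr rfl fun T _ => hprod0 T, Finset.sum_boole]
  have hD0 : (0:ℝ) < (STC.card : ℝ) := by
    exact_mod_cast Finset.card_pos.2 hSTCne
  have hnum0 : ∀ e : Sym2 V,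
      (∑ T ∈ (spanningTrees G).filter (fun T => e ∈ T), ∏ t ∈ T, c 0 t)
        = ((STC.filter fun T => e ∈ T).card : ℝ) := by
    intro e
    rw [Finset.sum_congr rfl fun T _ => hprod0 T, Finset.sum_boole, hSTC, Finset.filter_comm]
  -- positivity of the curvature at the limit weight
  have hcurv0 : ∀ v : V, 0 < curv G (c 0) v := by
    intro v
    obtain ⟨T₀, hT₀, hT₀C, hT₀1⟩ := hgood v
    have hT₀STC : T₀ ∈ STC := Finset.mem_filter.2 ⟨hT₀, hT₀C⟩
    have hub : ∀ T ∈ STC, ((G.neighborFinset v).filter fun u => s(u, v) ∈ T).card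
        ≤ (T.filter fun e => v ∈ e).card := by
      intro T hT
      apply Finset.card_le_card_of_injOn (fun u => s(u, v))
      · intro u hu
        simp only [Finset.mem_filter] at hu ⊢
        exact Finset.mem_filter.2 ⟨(Finset.mem_filter.1 hu).2, by simp⟩
      · intro u hu u' hu' huv
        exact Sym2.congr_left.1 huv
    have hX : ∑ T ∈ STC, ((G.neighborFinset v).filter fun u => s(u, v) ∈ T).card
        < 2 * STC.card := by
      have hub2 : ∀ T ∈ STC, ((G.neighborFinset v).filter fun u => s(u, v) ∈ T).card ≤ 2 := by
        intro T hT
        refine le_trans (hub T hT) (le_trans (Finset.card_le_card ?_) (hCev v))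
        exact Finset.filter_subset_filter _ (Finset.mem_filter.1 hT).2
      calc ∑ T ∈ STC, ((G.neighborFinset v).filter fun u => s(u, v) ∈ T).card
          < ∑ _T ∈ STC, 2 :=
            Finset.sum_lt_sum hub2
              ⟨T₀, hT₀STC, lt_of_le_of_lt (le_trans (hub T₀ hT₀STC) hT₀1) one_lt_two⟩
        _ = 2 * STC.card := by rw [Finset.sum_const, smul_eq_mul, mul_comm]
    -- switch the order of summation
    have hswap : ∑ u ∈ G.neighborFinset v, (STC.filter fun T => s(u, v) ∈ T).card
        = ∑ T ∈ STC, ((G.neighborFinset v).filter fun u => s(u, v) ∈ T).card := by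
      simp only [Finset.card_filter]
      rw [Finset.sum_comm]
    have hsum : ∑ u ∈ G.neighborFinset v, relRes G (c 0) s(u, v)
        = ((∑ u ∈ G.neighborFinset v, (STC.filter fun T => s(u, v) ∈ T).card : ℕ) : ℝ)
          / (STC.card : ℝ) := by
      push_cast
      rw [Finset.sum_div]
      refine Finset.sum_congr rfl fun u _ => ?_
      rw [relRes, hnum0, hden0]
    have hXR : ((∑ u ∈ G.neighborFinset v, (STC.filter fun T => s(u, v) ∈ T).card : ℕ) : ℝ)
        < 2 * (STC.card : ℝ) := by
      rw [hswap] at *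
      exact_mod_cast hX
    rw [curv, hsum]
    have hdiv : ((∑ u ∈ G.neighborFinset v, (STC.filter fun T => s(u, v) ∈ T).card : ℕ) : ℝ)
        / (STC.card : ℝ) < 2 := by
      rw [div_lt_iff₀ hD0]
      linarith
    linarith
  -- continuity in the weight parameter at 0
  have hden : Continuous fun ε : ℝ => ∑ T ∈ spanningTrees G, ∏ t ∈ T, c ε t := by
    apply continuous_finset_sum
    intro T _
    apply continuous_finset_prod
    intro t _
    by_cases h : t ∈ Ce <;> simp only [hcdef, h, if_true, if_false]
    · exact continuous_const
    · exact continuous_id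
  have hnum : ∀ e : Sym2 V, Continuous fun ε : ℝ =>
      ∑ T ∈ (spanningTrees G).filter (fun T => e ∈ T), ∏ t ∈ T, c ε t := by
    intro e
    apply continuous_finset_sum
    intro T _
    apply continuous_finset_prod
    intro t _
    by_cases h : t ∈ Ce <;> simp only [hcdef, h, if_true, if_false]
    · exact continuous_const
    · exact continuous_id
  have hdne : (∑ T ∈ spanningTrees G, ∏ t ∈ T, c 0 t) ≠ 0 := by
    rw [hden0]; exact ne_of_gt hD0
  have hrel : ∀ e : Sym2 V, ContinuousAt (fun ε => relRes G (c ε) e) 0 := by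
    intro e
    have : (fun ε => relRes G (c ε) e)
        = fun ε => (∑ T ∈ (spanningTrees G).filter (fun T => e ∈ T), ∏ t ∈ T, c ε t)
          / (∑ T ∈ spanningTrees G, ∏ t ∈ T, c ε t) := rfl
    rw [this]
    exact ((hnum e).continuousAt).div (hden.continuousAt) hdne
  have hcont : ∀ v : V, ContinuousAt (fun ε => curv G (c ε) v) 0 := by
    intro v
    have : (fun ε => curv G (c ε) v)
        = fun ε => 1 - (1 / 2) * ∑ u ∈ G.neighborFinset v, relRes G (c ε) s(u, v) := rfl
    rw [this]
    apply ContinuousAt.sub continuousAt_const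
    apply ContinuousAt.mul continuousAt_const
    exact tendsto_finset_sum _ fun u _ => hrel s(u, v)
  -- eventually positive for small positive ε
  have hev : ∀ v : V, ∀ᶠ ε in nhdsWithin (0:ℝ) (Set.Ioi 0), 0 < curv G (c ε) v := by
    intro v
    exact Filter.Eventually.filter_mono nhdsWithin_le_nhds
      ((hcont v).eventually (eventually_gt_nhds (hcurv0 v)))
  have hfin : ∀ᶠ ε in nhdsWithin (0:ℝ) (Set.Ioi 0),
      (∀ v : V, 0 < curv G (c ε) v) ∧ 0 < ε := by
    refine Filter.Eventually.and (Filter.eventually_all.2 hev) ?_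
    filter_upwards [self_mem_nhdsWithin] with ε hε
    exact hε
  obtain ⟨ε, hεv, hεpos⟩ := hfin.exists
  refine ⟨c ε, ?_, hεv⟩
  intro e _
  by_cases h : e ∈ Ce <;> simp only [hcdef, h, if_true, if_false]
  · exact one_pos
  · exact hεpos
end

section
/- For natural numbers m, n > 1 with m·n even, the grid graph P_n □ P_m (the Cartesian product of the path graphs on n and on m vertices) is resistance positive (RP). -/
open scoped Classical

namespace RCurv

variable {V : Type*} [Fintype V] [DecidableEq V]

lemma walk_invariant {G' : SimpleGraph V} (p : V → Prop)
    (h : ∀ x y, G'.Adj x y → (p x ↔ p y)) {v w : V} (wlk : G'.Walk v w) : p v ↔ p w := by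
  induction wlk with
  | nil => exact Iff.rfl
  | cons h' _ ih => exact (h _ _ h').trans ih

lemma path_spanning (G : SimpleGraph V) (N : ℕ) (hN : 2 ≤ N) (hNV : Fintype.card V = N)
    (g : ℕ → V)
    (hinj : ∀ k l, k < N → l < N → g k = g l → k = l)
    (hsurj : ∀ v : V, ∃ k, k < N ∧ g k = v)
    (hadjg : ∀ k, k + 1 < N → G.Adj (g k) (g (k+1))) :
    IsSpanningTree G (Finset.image (fun k => s(g k, g (k+1))) (Finset.range (N-1))) := by
  set T := Finset.image (fun k => s(g k, g (k+1))) (Finset.range (N-1)) with hT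
  have hmem : ∀ e, e ∈ T ↔ ∃ k, k < N - 1 ∧ s(g k, g (k+1)) = e := by
    intro e
    simp only [hT, Finset.mem_image, Finset.mem_range]
  have hTE : (T : Set (Sym2 V)) ⊆ G.edgeSet := by
    intro e he
    rw [Finset.mem_coe, hmem] at he
    obtain ⟨k, hk, rfl⟩ := he
    exact (hadjg k (by omega))
  -- adjacency in the fromEdgeSet graph
  have hadj' : ∀ x y, (SimpleGraph.fromEdgeSet (T : Set (Sym2 V))).Adj x y ↔
      (∃ k, k < N - 1 ∧ s(g k, g (k+1)) = s(x, y)) ∧ x ≠ y := by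
    intro x y
    rw [SimpleGraph.fromEdgeSet_adj, Finset.mem_coe, hmem]
  refine ⟨hTE, ?_, ?_⟩
  · -- connected
    have hne : Nonempty V := by
      rw [← Fintype.card_pos_iff, hNV]; omega
    refine ⟨fun v w => ?_⟩
    have key : ∀ a, a < N → (SimpleGraph.fromEdgeSet (T : Set (Sym2 V))).Reachable (g 0) (g a) := by
      intro a
      induction a with
      | zero => intro _; exact SimpleGraph.Reachable.refl _
      | succ b ih =>
        intro hb
        refine (ih (by omega)).trans ?_
        refine SimpleGraph.Adj.reachable ?_
        rw [hadj']
        exact ⟨⟨b, by omega, rfl⟩, fun h => by have := hinj b (b+1) (by omega) hb h; omega⟩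
    obtain ⟨a, ha, rfl⟩ := hsurj v
    obtain ⟨b, hb, rfl⟩ := hsurj w
    exact (key a ha).symm.trans (key b hb)
  · -- acyclic
    rw [SimpleGraph.isAcyclic_iff_forall_adj_isBridge]
    intro x y hxy
    obtain ⟨⟨k, hk, hks⟩, hne⟩ := (hadj' x y).mp hxy
    have : SimpleGraph.IsBridge (SimpleGraph.fromEdgeSet (T : Set (Sym2 V))) s(g k, g (k+1)) := by
      rw [SimpleGraph.isBridge_iff]
      refine And.right (a := (SimpleGraph.fromEdgeSet (T : Set (Sym2 V))).Adj (g k) (g (k+1))) ?_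
      constructor
      · rw [hadj']
        exact ⟨⟨k, hk, rfl⟩, fun h => by have := hinj k (k+1) (by omega) (by omega) h; omega⟩
      · rintro ⟨wlk⟩
        -- invariant: index ≤ k
        have hidx : ∀ v : V, ∃ l, l < N ∧ g l = v := hsurj
        classical
        let idx : V → ℕ := fun v => (hidx v).choose
        have hidx1 : ∀ v, idx v < N := fun v => (hidx v).choose_spec.1
        have hidx2 : ∀ v, g (idx v) = v := fun v => (hidx v).choose_spec.2
        have hidx3 : ∀ l, l < N → idx (g l) = l := by
          intro l hl
          exact hinj _ _ (hidx1 _) hl (hidx2 _)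
        have hinv := walk_invariant (G' := (SimpleGraph.fromEdgeSet (T : Set (Sym2 V)) \
            SimpleGraph.fromEdgeSet {s(g k, g (k+1))})) (fun v => idx v ≤ k) ?_ wlk
        · have hinv : idx (g k) ≤ k ↔ idx (g (k+1)) ≤ k := hinv
          rw [hidx3 k (by omega), hidx3 (k+1) (by omega)] at hinv
          omega
        · intro a b hab
          rw [SimpleGraph.sdiff_adj] at hab
          obtain ⟨hab1, hab2⟩ := hab
          rw [hadj'] at hab1
          obtain ⟨⟨l, hl, hls⟩, hneab⟩ := hab1
          have hlk : l ≠ k := by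
            intro h
            subst h
            exact hab2 (by rw [SimpleGraph.fromEdgeSet_adj]; exact ⟨by rw [← hls]; rfl, hneab⟩)
          rw [Sym2.eq_iff] at hls
          rcases hls with ⟨h1, h2⟩ | ⟨h1, h2⟩
          · show idx a ≤ k ↔ idx b ≤ k
            rw [← h1, ← h2, hidx3 l (by omega), hidx3 (l+1) (by omega)]
            omega
          · show idx a ≤ k ↔ idx b ≤ k
            rw [← h2, ← h1, hidx3 l (by omega), hidx3 (l+1) (by omega)]
            omega
    rwa [hks] at this



lemma main (G : SimpleGraph V) (C : Finset (Sym2 V))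
    (hN3 : 3 ≤ Fintype.card V)
    (hCE : (C : Set (Sym2 V)) ⊆ G.edgeSet)
    (hcard : C.card = Fintype.card V)
    (hdeg : ∀ v : V, (C.filter (fun e => v ∈ e)).card = 2)
    (htree : ∀ e ∈ C, (C.erase e) ∈ spanningTrees G) :
    IsRP G := by
  classical
  set N := Fintype.card V with hNdef
  set 𝒯 := spanningTrees G with h𝒯
  have hTmem : ∀ T ∈ 𝒯, IsSpanningTree G T := by
    intro T hT
    rw [h𝒯, spanningTrees, Finset.mem_filter] at hT
    exact hT.2
  have hTcard : ∀ T ∈ 𝒯, T.card + 1 = N := by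
    intro T hT
    have hST := hTmem T hT
    have h1 := hST.2.card_edgeFinset
    have h2 : (SimpleGraph.fromEdgeSet (T : Set (Sym2 V))).edgeFinset = T := by
      ext e
      simp only [SimpleGraph.mem_edgeFinset, SimpleGraph.edgeSet_fromEdgeSet, Set.mem_diff,
        Finset.mem_coe, Set.mem_setOf_eq]
      constructor
      · exact fun h => h.1
      · intro h
        exact ⟨h, G.not_isDiag_of_mem_edgeSet (hST.1 h)⟩
    rwa [h2] at h1
  -- the weight
  set t : ℝ := (𝒯.card * N : ℕ) + 1 with htdef
  have ht0 : (0:ℝ) < t := by positivity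
  have ht1 : (1:ℝ) ≤ t := by
    rw [htdef]
    have : (0:ℝ) ≤ (𝒯.card * N : ℕ) := Nat.cast_nonneg _
    linarith
  set c : Sym2 V → ℝ := fun e => if e ∈ C then t else 1 with hcdef
  have hcpos : ∀ e, 0 < c e := by
    intro e; rw [hcdef]; dsimp only; split <;> [exact ht0; norm_num]
  have hprod : ∀ T : Finset (Sym2 V), ∏ e ∈ T, c e = t ^ (T ∩ C).card := by
    intro T
    have h1 : T.filter (fun e => e ∈ C) = T ∩ C := by
      ext e; simp [Finset.mem_filter, Finset.mem_inter]
    have h2 : ∏ e ∈ T.filter (fun e => e ∈ C), c e = ∏ _e ∈ T.filter (fun e => e ∈ C), t :=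
      Finset.prod_congr rfl (fun e he => by
        rw [hcdef]; simp [(Finset.mem_filter.mp he).2])
    have h3 : ∏ e ∈ T.filter (fun e => ¬ e ∈ C), c e = 1 :=
      Finset.prod_eq_one (fun e he => by
        rw [hcdef]; simp [(Finset.mem_filter.mp he).2])
    rw [← Finset.prod_filter_mul_prod_filter_not T (fun e => e ∈ C) c, h2, h3,
      Finset.prod_const, h1, mul_one]
  set D : ℝ := ∑ T ∈ 𝒯, t ^ (T ∩ C).card with hDdef
  have hCne : C.Nonempty := Finset.card_pos.mp (by omega)
  obtain ⟨e0, he0⟩ := hCne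
  have hTne : 𝒯.Nonempty := ⟨C.erase e0, htree e0 he0⟩
  have hD : 0 < D := Finset.sum_pos (fun T _ => pow_pos ht0 _) hTne
  refine ⟨c, fun e _ => hcpos e, ?_⟩
  intro v
  -- the count swap
  have card_eq : ∀ T ∈ 𝒯, ((G.neighborFinset v).filter (fun u => s(u,v) ∈ T)).card
      = (T.filter (fun e => v ∈ e)).card := by
    intro T hT
    refine Finset.card_bij (fun u _ => s(u,v)) ?_ ?_ ?_
    · intro u hu
      rw [Finset.mem_filter] at hu ⊢
      exact ⟨hu.2, Sym2.mem_mk_right u v⟩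
    · intro u hu u' hu' h
      rw [Finset.mem_filter, SimpleGraph.mem_neighborFinset] at hu hu'
      rw [Sym2.eq_iff] at h
      rcases h with ⟨h1, _⟩ | ⟨h1, h2⟩
      · exact h1
      · exact absurd h1.symm hu.1.ne
    · intro e he
      rw [Finset.mem_filter] at he
      obtain ⟨heT, hev⟩ := he
      have heE : e ∈ G.edgeSet := (hTmem T hT).1 heT
      obtain ⟨w, rfl⟩ := Sym2.mem_iff_exists.mp hev
      have hadj : G.Adj v w := (SimpleGraph.mem_edgeSet G).mp heE
      refine ⟨w, Finset.mem_filter.mpr ⟨(SimpleGraph.mem_neighborFinset _ _ _).mpr hadj, ?_⟩, ?_⟩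
      · rw [Sym2.eq_swap]
        exact heT
      · exact Sym2.eq_swap
  set S : ℝ := ∑ T ∈ 𝒯, ((T.filter (fun e => v ∈ e)).card : ℝ) * t ^ (T ∩ C).card with hSdef
  have hswap : ∑ u ∈ G.neighborFinset v,
      (∑ T ∈ 𝒯.filter (fun T => s(u,v) ∈ T), t ^ (T ∩ C).card) = S := by
    have h1 : ∀ u, ∑ T ∈ 𝒯.filter (fun T => s(u,v) ∈ T), t ^ (T ∩ C).card
        = ∑ T ∈ 𝒯, if s(u,v) ∈ T then t ^ (T ∩ C).card else 0 := fun u =>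
      (Finset.sum_filter _ _)
    rw [Finset.sum_congr rfl (fun u _ => h1 u), Finset.sum_comm]
    rw [hSdef]
    refine Finset.sum_congr rfl (fun T hT => ?_)
    rw [← Finset.sum_filter, Finset.sum_const, card_eq T hT, nsmul_eq_mul]
  -- the set of trees obtained by deleting an edge from the cycle
  set A : Finset (Finset (Sym2 V)) := C.image (fun e => C.erase e) with hAdef
  have hAsub : A ⊆ 𝒯 := by
    intro T hT
    rw [hAdef, Finset.mem_image] at hT
    obtain ⟨e, he, rfl⟩ := hT
    exact htree e he
  have hErInj : ∀ e ∈ C, ∀ e' ∈ C, C.erase e = C.erase e' → e = e' := by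
    intro e he e' he' h
    by_contra hne
    have : e' ∈ C.erase e := Finset.mem_erase.mpr ⟨fun hh => hne hh.symm, he'⟩
    rw [h] at this
    exact (Finset.mem_erase.mp this).1 rfl
  have hsumA : ∑ T ∈ A, (2 - ((T.filter (fun e => v ∈ e)).card : ℝ)) * t ^ (T ∩ C).card
      = 2 * t ^ (N - 1) := by
    rw [hAdef, Finset.sum_image hErInj]
    have hterm : ∀ e ∈ C, (2 - (((C.erase e).filter (fun e' => v ∈ e')).card : ℝ))
        * t ^ ((C.erase e) ∩ C).card = (if v ∈ e then (1:ℝ) else 0) * t ^ (N - 1) := by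
      intro e he
      have hk1 : (C.erase e) ∩ C = C.erase e := Finset.inter_eq_left.mpr (Finset.erase_subset _ _)
      have hk2 : (C.erase e).card = N - 1 := by
        rw [Finset.card_erase_of_mem he, hcard]
      have hfilter : (C.erase e).filter (fun e' => v ∈ e') = (C.filter (fun e' => v ∈ e')).erase e := by
        ext x
        simp only [Finset.mem_filter, Finset.mem_erase]
        tauto
      rw [hk1, hk2, hfilter]
      by_cases hv : v ∈ e
      · have he2 : e ∈ C.filter (fun e' => v ∈ e') := Finset.mem_filter.mpr ⟨he, hv⟩
        rw [Finset.card_erase_of_mem he2, hdeg v, if_pos hv]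
        norm_num
      · have he2 : e ∉ C.filter (fun e' => v ∈ e') := fun h => hv (Finset.mem_filter.mp h).2
        rw [Finset.erase_eq_of_notMem he2, hdeg v, if_neg hv]
        norm_num
    rw [Finset.sum_congr rfl hterm, ← Finset.sum_mul, Finset.sum_boole, hdeg v]
    norm_num
  have hkle : ∀ T ∈ 𝒯 \ A, (T ∩ C).card ≤ N - 2 := by
    intro T hT
    rw [Finset.mem_sdiff] at hT
    obtain ⟨hT1, hT2⟩ := hT
    have hc1 : (T ∩ C).card ≤ T.card := Finset.card_le_card (Finset.inter_subset_left)
    have hc2 : T.card + 1 = N := hTcard T hT1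
    by_contra hcon
    have heq : (T ∩ C).card = N - 1 := by omega
    have hTC : T ∩ C = T := Finset.eq_of_subset_of_card_le Finset.inter_subset_left (by omega)
    have hTsubC : T ⊆ C := by
      intro a ha
      have : a ∈ T ∩ C := hTC.symm ▸ ha
      exact (Finset.mem_inter.mp this).2
    have hdiff : (C \ T).card = 1 := by
      rw [Finset.card_sdiff_of_subset hTsubC]; omega
    obtain ⟨e, hee⟩ := Finset.card_eq_one.mp hdiff
    have heC : e ∈ C := by
      have : e ∈ C \ T := hee ▸ Finset.mem_singleton_self e
      exact (Finset.mem_sdiff.mp this).1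
    have hTeq : T = C.erase e := by
      ext a
      rw [Finset.mem_erase]
      constructor
      · intro ha
        refine ⟨fun hh => ?_, hTsubC ha⟩
        subst hh
        have : a ∈ C \ T := hee ▸ Finset.mem_singleton_self a
        exact (Finset.mem_sdiff.mp this).2 ha
      · rintro ⟨hne, haC⟩
        by_contra haT
        have : a ∈ C \ T := Finset.mem_sdiff.mpr ⟨haC, haT⟩
        rw [hee, Finset.mem_singleton] at this
        exact hne this
    exact hT2 (hAdef ▸ Finset.mem_image.mpr ⟨e, heC, hTeq.symm⟩)
  have hrest : ∑ T ∈ 𝒯 \ A, (2 - ((T.filter (fun e => v ∈ e)).card : ℝ)) * t ^ (T ∩ C).card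
      ≥ -((𝒯.card : ℝ) * N * t ^ (N - 2)) := by
    have hterm : ∀ T ∈ 𝒯 \ A, (2 - ((T.filter (fun e => v ∈ e)).card : ℝ)) * t ^ (T ∩ C).card
        ≥ -((N : ℝ) * t ^ (N - 2)) := by
      intro T hT
      have hT1 : T ∈ 𝒯 := (Finset.mem_sdiff.mp hT).1
      have hd : ((T.filter (fun e => v ∈ e)).card : ℝ) ≤ (N : ℝ) := by
        have h1 : (T.filter (fun e => v ∈ e)).card ≤ T.card := Finset.card_le_card (Finset.filter_subset _ _)
        have h2 := hTcard T hT1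
        exact_mod_cast Nat.le_of_lt (by omega)
      have h1 : -(N:ℝ) ≤ 2 - ((T.filter (fun e => v ∈ e)).card : ℝ) := by linarith
      have h2 : t ^ (T ∩ C).card ≤ t ^ (N - 2) := pow_le_pow_right₀ ht1 (hkle T hT)
      have h3 : (0:ℝ) ≤ t ^ (T ∩ C).card := le_of_lt (pow_pos ht0 _)
      have h4 : (0:ℝ) ≤ t ^ (N - 2) := le_of_lt (pow_pos ht0 _)
      have h5 : (0:ℝ) ≤ (N : ℝ) := Nat.cast_nonneg _
      rcases le_or_gt 0 (2 - ((T.filter (fun e => v ∈ e)).card : ℝ)) with hs | hs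
      · nlinarith
      · nlinarith
    calc ∑ T ∈ 𝒯 \ A, (2 - ((T.filter (fun e => v ∈ e)).card : ℝ)) * t ^ (T ∩ C).card
        ≥ ∑ _T ∈ 𝒯 \ A, -((N : ℝ) * t ^ (N - 2)) := Finset.sum_le_sum hterm
      _ = ((𝒯 \ A).card : ℝ) * -((N : ℝ) * t ^ (N - 2)) := by
          rw [Finset.sum_const, nsmul_eq_mul]
      _ ≥ -((𝒯.card : ℝ) * N * t ^ (N - 2)) := by
          have hc : ((𝒯 \ A).card : ℝ) ≤ (𝒯.card : ℝ) := by
            exact_mod_cast Finset.card_le_card (Finset.sdiff_subset)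
          have h4 : (0:ℝ) ≤ t ^ (N - 2) := le_of_lt (pow_pos ht0 _)
          have h5 : (0:ℝ) ≤ (N : ℝ) := Nat.cast_nonneg _
          nlinarith [mul_nonneg (mul_nonneg (sub_nonneg.mpr hc) h5) h4]
  have key : (0:ℝ) < ∑ T ∈ 𝒯, (2 - ((T.filter (fun e => v ∈ e)).card : ℝ)) * t ^ (T ∩ C).card := by
    rw [← Finset.sum_sdiff hAsub]
    have hpow : t ^ (N - 1) = t ^ (N - 2) * t := by
      have he : N - 1 = (N - 2) + 1 := by omega
      rw [he, pow_succ]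
    have htt : t = ((𝒯.card * N : ℕ) : ℝ) + 1 := htdef
    have htN : ((𝒯.card * N : ℕ) : ℝ) = (𝒯.card : ℝ) * N := by push_cast; ring
    have h4 : (0:ℝ) < t ^ (N - 2) := pow_pos ht0 _
    have := hrest
    rw [hsumA, hpow]
    rw [htN] at htt
    nlinarith
  -- assemble
  have hrel : ∀ u : V, relRes G c s(u, v)
      = (∑ T ∈ 𝒯.filter (fun T => s(u,v) ∈ T), t ^ (T ∩ C).card) / D := by
    intro u
    rw [relRes, hDdef]
    congr 1
    · exact Finset.sum_congr rfl fun T _ => hprod T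
    · exact Finset.sum_congr rfl fun T _ => hprod T
  have hsum : ∑ u ∈ G.neighborFinset v, relRes G c s(u, v) = S / D := by
    rw [Finset.sum_congr rfl (fun u _ => hrel u), ← Finset.sum_div, hswap]
  have hSD : S < 2 * D := by
    have h2D : 2 * D - S = ∑ T ∈ 𝒯, (2 - ((T.filter (fun e => v ∈ e)).card : ℝ)) * t ^ (T ∩ C).card := by
      rw [hDdef, hSdef, Finset.mul_sum, ← Finset.sum_sub_distrib]
      exact Finset.sum_congr rfl fun T _ => by ring
    have hk := key
    rw [← h2D] at hk
    linarith
  rw [curv, hsum]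
  have hlt : S / D < 2 := (div_lt_iff₀ hD).mpr (by linarith)
  linarith



lemma cycle_gives (G : SimpleGraph V) (N : ℕ) (hN : 3 ≤ N) (hNV : Fintype.card V = N)
    (f : ZMod N → V) (hf : Function.Bijective f)
    (hadj : ∀ i : ZMod N, G.Adj (f i) (f (i + 1))) : IsRP G := by
  haveI : NeZero N := ⟨by omega⟩
  have hedgeinj : ∀ i i' : ZMod N, s(f i, f (i+1)) = s(f i', f (i'+1)) → i = i' := by
    intro i i' h
    rw [Sym2.eq_iff] at h
    rcases h with ⟨h1, _⟩ | ⟨h1, h2⟩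
    · exact hf.1 h1
    · have e1 : i = i' + 1 := hf.1 h1
      have e2 : i + 1 = i' := hf.1 h2
      have h2eq : i = i + 1 + 1 := by conv_lhs => rw [e1, ← e2]
      have h2eq' : i = i + 2 := by
        calc i = i + 1 + 1 := h2eq
          _ = i + 2 := by ring
      have h20 : ((2:ℕ) : ZMod N) = 0 := by
        have := (left_eq_add.mp h2eq')
        exact_mod_cast this
      have hdvd := (ZMod.natCast_eq_zero_iff 2 N).mp h20
      have := Nat.le_of_dvd (by norm_num) hdvd
      omega
  set C : Finset (Sym2 V) := Finset.image (fun i : ZMod N => s(f i, f (i+1))) Finset.univ with hCdef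
  have hCmem : ∀ e, e ∈ C ↔ ∃ i : ZMod N, s(f i, f (i+1)) = e := by
    intro e
    simp [hCdef, Finset.mem_image]
  have hCE : (C : Set (Sym2 V)) ⊆ G.edgeSet := by
    intro e he
    rw [Finset.mem_coe, hCmem] at he
    obtain ⟨i, rfl⟩ := he
    exact hadj i
  have hcard : C.card = Fintype.card V := by
    rw [hCdef, Finset.card_image_of_injOn (fun i _ i' _ h => hedgeinj i i' h),
      Finset.card_univ, ZMod.card, hNV]
  apply main G C (by rw [hNV]; exact hN) hCE hcard
  · -- degree 2
    intro v
    obtain ⟨j, rfl⟩ := hf.2 v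
    have h2 : C.filter (fun e => f j ∈ e) = {s(f (j-1), f j), s(f j, f (j+1))} := by
      ext e
      rw [Finset.mem_filter, hCmem]
      constructor
      · rintro ⟨⟨i, rfl⟩, hmem⟩
        rw [Sym2.mem_iff] at hmem
        rcases hmem with h | h
        · have : j = i := hf.1 h
          subst this
          simp
        · have : j = i + 1 := hf.1 h
          have hi : i = j - 1 := by rw [this]; ring
          subst hi
          rw [Finset.mem_insert]
          left
          rw [sub_add_cancel]
      · intro h
        rw [Finset.mem_insert, Finset.mem_singleton] at h
        rcases h with rfl | rfl
        · refine ⟨⟨j - 1, by rw [sub_add_cancel]⟩, Sym2.mem_mk_right _ _⟩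
        · exact ⟨⟨j, rfl⟩, Sym2.mem_mk_left _ _⟩
    rw [h2]
    rw [Finset.card_insert_of_notMem, Finset.card_singleton]
    rw [Finset.mem_singleton]
    intro h
    have : s(f (j-1), f ((j-1)+1)) = s(f j, f (j+1)) := by rwa [sub_add_cancel]
    have hj := hedgeinj _ _ this
    have h10 : ((1:ℕ) : ZMod N) = 0 := by
      have h1 : (1 : ZMod N) = 0 := by
        have h2 := sub_eq_iff_eq_add.mp hj
        exact (left_eq_add.mp h2)
      exact_mod_cast h1
    have hdvd := (ZMod.natCast_eq_zero_iff 1 N).mp h10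
    have := Nat.le_of_dvd (by norm_num) hdvd
    omega
  · -- spanning trees
    intro e he
    rw [hCmem] at he
    obtain ⟨j, rfl⟩ := he
    set g : ℕ → V := fun k => f (j + 1 + (k : ZMod N)) with hgdef
    have hginj : ∀ k l, k < N → l < N → g k = g l → k = l := by
      intro k l hk hl h
      have := hf.1 h
      have h2 : (k : ZMod N) = (l : ZMod N) := by
        have := add_left_cancel this
        exact this
      have := congrArg ZMod.val h2
      rwa [ZMod.val_cast_of_lt hk, ZMod.val_cast_of_lt hl] at this
    have hgsurj : ∀ v : V, ∃ k, k < N ∧ g k = v := by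
      intro v
      obtain ⟨i, rfl⟩ := hf.2 v
      refine ⟨(i - (j + 1)).val, ZMod.val_lt _, ?_⟩
      rw [hgdef]
      dsimp only
      rw [ZMod.natCast_zmod_val]
      congr 1
      ring
    have hgadj : ∀ k, k + 1 < N → G.Adj (g k) (g (k+1)) := by
      intro k _
      have : g (k+1) = f ((j + 1 + (k : ZMod N)) + 1) := by
        rw [hgdef]
        dsimp only
        push_cast
        ring_nf
      rw [this]
      exact hadj _
    have hST := path_spanning G N (by omega) hNV g hginj hgsurj hgadj
    have heq : C.erase s(f j, f (j+1)) = Finset.image (fun k => s(g k, g (k+1))) (Finset.range (N-1)) := by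
      ext x
      rw [Finset.mem_erase, hCmem, Finset.mem_image]
      constructor
      · rintro ⟨hne, i, rfl⟩
        have hij : i ≠ j := fun h => hne (by rw [h])
        set k := (i - (j + 1)).val with hkdef
        have hk1 : k < N := ZMod.val_lt _
        have hkcast : (k : ZMod N) = i - (j+1) := ZMod.natCast_zmod_val _
        have hkne : k ≠ N - 1 := by
          intro h
          apply hij
          have hm1 : ((N - 1 : ℕ) : ZMod N) = -1 := by
            rw [Nat.cast_sub (by omega), ZMod.natCast_self, Nat.cast_one]
            ring
          have h9 : i - (j + 1) = -1 := by rw [← hkcast, h]; exact hm1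
          rw [sub_eq_iff_eq_add] at h9
          rw [h9]; ring
        refine ⟨k, Finset.mem_range.mpr (by omega), ?_⟩
        have hg1 : g k = f i := by
          rw [hgdef]; dsimp only; rw [hkcast]; congr 1; ring
        have hg2 : g (k+1) = f (i+1) := by
          rw [hgdef]; dsimp only
          push_cast
          rw [hkcast]; congr 1; ring
        rw [hg1, hg2]
      · rintro ⟨k, hk, rfl⟩
        rw [Finset.mem_range] at hk
        have hg1 : g k = f (j + 1 + (k : ZMod N)) := rfl
        have hg2 : g (k+1) = f ((j + 1 + (k : ZMod N)) + 1) := by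
          rw [hgdef]; dsimp only; push_cast; ring_nf
        constructor
        · rw [hg1, hg2]
          intro h
          have := hedgeinj _ _ h
          -- j + 1 + k = j → (k+1 : ZMod N) = 0
          have h0 : ((k + 1 : ℕ) : ZMod N) = 0 := by
            push_cast
            linear_combination this
          have hdvd := (ZMod.natCast_eq_zero_iff (k+1) N).mp h0
          have := Nat.le_of_dvd (by omega) hdvd
          omega
        · exact ⟨j + 1 + (k : ZMod N), by rw [hg1, hg2]⟩
    rw [heq, spanningTrees, Finset.mem_filter]
    exact ⟨Finset.mem_univ _, hST⟩


lemma cycle_gives_nat (G : SimpleGraph V) (N : ℕ) (hN : 3 ≤ N) (hNV : Fintype.card V = N)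
    (g : ℕ → V)
    (hinj : ∀ k l, k < N → l < N → g k = g l → k = l)
    (hadjg : ∀ k, k + 1 < N → G.Adj (g k) (g (k+1)))
    (hwrap : G.Adj (g (N-1)) (g 0)) : IsRP G := by
  haveI : NeZero N := ⟨by omega⟩
  haveI : Fact (1 < N) := ⟨by omega⟩
  set f : ZMod N → V := fun i => g i.val with hfdef
  have hfinj : Function.Injective f := by
    intro i i' h
    have := hinj i.val i'.val (ZMod.val_lt i) (ZMod.val_lt i') h
    exact ZMod.val_injective N this
  have hfbij : Function.Bijective f :=
    (Fintype.bijective_iff_injective_and_card f).mpr ⟨hfinj, by rw [ZMod.card, hNV]⟩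
  apply cycle_gives G N hN hNV f hfbij
  intro i
  have hval : (i + 1).val = (i.val + 1) % N := by
    rw [ZMod.val_add, ZMod.val_one]
  rcases Nat.lt_or_ge (i.val + 1) N with h | h
  · have : (i + 1).val = i.val + 1 := by rw [hval, Nat.mod_eq_of_lt h]
    rw [hfdef]
    dsimp only
    rw [this]
    exact hadjg i.val h
  · have hi : i.val = N - 1 := by have := ZMod.val_lt i; omega
    have : (i + 1).val = 0 := by rw [hval, hi]; simp [Nat.sub_add_cancel (by omega : 1 ≤ N)]
    rw [hfdef]
    dsimp only
    rw [this, hi]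
    exact hwrap



/-- Boustrophedon Hamiltonian cycle in a `p × q` grid (`q` even). -/
def snake (p q i : ℕ) : ℕ × ℕ :=
  if i < p then (i, 0)
  else if i < p + (p-1)*(q-1) then
    ((if ((i-p)/(p-1)+1) % 2 = 1 then p - 1 - ((i-p) % (p-1)) else 1 + ((i-p) % (p-1))),
      (i-p)/(p-1)+1)
  else (0, q - 1 - (i - p - (p-1)*(q-1)))

/-- Inverse of `snake`. -/
def rank (p q : ℕ) (z : ℕ × ℕ) : ℕ :=
  if z.2 = 0 then z.1
  else if z.1 = 0 then p + (p-1)*(q-1) + (q-1-z.2)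
  else p + (p-1)*(z.2-1) + (if z.2 % 2 = 1 then p-1-z.1 else z.1-1)

lemma grid_total {p q : ℕ} (hp : 2 ≤ p) (hq : 2 ≤ q) :
    p * q = p + (p-1)*(q-1) + (q-1) := by
  obtain ⟨p', rfl⟩ : ∃ p', p = p' + 2 := ⟨p - 2, by omega⟩
  obtain ⟨q', rfl⟩ : ∃ q', q = q' + 2 := ⟨q - 2, by omega⟩
  have h1 : p' + 2 - 1 = p' + 1 := rfl
  have h2 : q' + 2 - 1 = q' + 1 := rfl
  rw [h1, h2]
  ring

lemma snake_lt {p q i : ℕ} (h : i < p) : snake p q i = (i, 0) := by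
  simp [snake, h]

lemma snake_mid {p q i : ℕ} (hp : 2 ≤ p) (h1 : p ≤ i) (h2 : i < p + (p-1)*(q-1)) :
    ∃ d r, i = p + (p-1)*d + r ∧ r < p-1 ∧ d < q-1 ∧
      snake p q i = (if (d+1) % 2 = 1 then p-1-r else 1+r, d+1) := by
  have hp1 : 0 < p - 1 := by omega
  set j := i - p with hj
  refine ⟨j / (p-1), j % (p-1), ?_, Nat.mod_lt _ hp1, ?_, ?_⟩
  · have := Nat.div_add_mod j (p-1)
    omega
  · have hlt : j < (p-1)*(q-1) := by omega
    rw [Nat.div_lt_iff_lt_mul hp1]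
    calc j < (p-1)*(q-1) := hlt
      _ = (q-1)*(p-1) := Nat.mul_comm _ _
  · rw [snake, if_neg (by omega), if_pos h2]

lemma snake_mid_val {p q : ℕ} (hp : 2 ≤ p) (d r : ℕ) (hr : r < p-1) (hd : d < q-1) :
    snake p q (p + (p-1)*d + r) = (if (d+1) % 2 = 1 then p-1-r else 1+r, d+1) := by
  have hp1 : 0 < p - 1 := by omega
  have hlt : p + (p-1)*d + r < p + (p-1)*(q-1) := by
    have h1 : (p-1)*(d+1) ≤ (p-1)*(q-1) := Nat.mul_le_mul_left _ (by omega)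
    have h2 : (p-1)*(d+1) = (p-1)*d + (p-1) := by ring
    omega
  rw [snake, if_neg (by omega), if_pos hlt]
  have hj : p + (p-1)*d + r - p = (p-1)*d + r := by omega
  rw [hj, Nat.mul_add_div hp1, Nat.mul_add_mod, Nat.div_eq_of_lt hr, Nat.mod_eq_of_lt hr,
    Nat.add_zero]

lemma snake_last {p q i : ℕ} (h : p + (p-1)*(q-1) ≤ i) :
    snake p q i = (0, q - 1 - (i - p - (p-1)*(q-1))) := by
  rw [snake, if_neg (by omega), if_neg (by omega)]


lemma snake_bounds {p q i : ℕ} (hp : 2 ≤ p) (hq : 2 ≤ q) (hi : i < p * q) :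
    (snake p q i).1 < p ∧ (snake p q i).2 < q := by
  have htot := grid_total hp hq
  rcases Nat.lt_or_ge i p with h | h
  · rw [snake_lt h]; exact ⟨h, by omega⟩
  rcases Nat.lt_or_ge i (p + (p-1)*(q-1)) with h2 | h2
  · obtain ⟨d, r, hi', hr, hd, hval⟩ := snake_mid hp h h2
    rw [hval]
    constructor
    · dsimp only
      split <;> omega
    · dsimp only; omega
  · rw [snake_last h2]
    exact ⟨by omega, by omega⟩

lemma rank_snake {p q i : ℕ} (hp : 2 ≤ p) (hq : 2 ≤ q) (hi : i < p * q) :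
    rank p q (snake p q i) = i := by
  have htot := grid_total hp hq
  rcases Nat.lt_or_ge i p with h | h
  · rw [snake_lt h]; simp [rank]
  rcases Nat.lt_or_ge i (p + (p-1)*(q-1)) with h2 | h2
  · obtain ⟨d, r, hi', hr, hd, hval⟩ := snake_mid hp h h2
    rw [hval, rank]
    dsimp only
    rw [if_neg (by omega)]
    rw [if_neg (by split <;> omega)]
    have hd1 : d + 1 - 1 = d := by omega
    rw [hd1]
    by_cases hpar : (d+1) % 2 = 1
    · rw [if_pos hpar, if_pos hpar]
      omega
    · rw [if_neg hpar, if_neg hpar]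
      omega
  · rw [snake_last h2, rank]
    dsimp only
    rw [if_neg (by omega), if_pos rfl]
    omega

lemma snake_zero {p q : ℕ} (hp : 2 ≤ p) : snake p q 0 = (0, 0) := snake_lt (by omega)

lemma snake_wrap {p q : ℕ} (hp : 2 ≤ p) (hq : 2 ≤ q) : snake p q (p*q - 1) = (0, 1) := by
  have htot := grid_total hp hq
  rw [snake_last (by omega)]
  have h1 : p*q - 1 - p - (p-1)*(q-1) = q - 2 := by omega
  rw [h1]
  have h2 : q - 1 - (q - 2) = 1 := by omega
  rw [h2]

lemma snake_step {p q i : ℕ} (hp : 2 ≤ p) (hq : 2 ≤ q) (hq2 : Even q) (hi : i + 1 < p*q) :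
    ((snake p q i).1 = (snake p q (i+1)).1 ∧
      ((snake p q i).2 + 1 = (snake p q (i+1)).2 ∨ (snake p q (i+1)).2 + 1 = (snake p q i).2)) ∨
    ((snake p q i).2 = (snake p q (i+1)).2 ∧
      ((snake p q i).1 + 1 = (snake p q (i+1)).1 ∨ (snake p q (i+1)).1 + 1 = (snake p q i).1)) := by
  have htot := grid_total hp hq
  obtain ⟨qh, hqh⟩ := hq2
  rcases Nat.lt_or_ge (i+1) p with h | h
  · rw [snake_lt (by omega : i < p), snake_lt h]
    dsimp only
    omega
  rcases Nat.eq_or_lt_of_le h with h1 | h1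
  · -- i + 1 = p
    have hB : snake p q (i+1) = (p-1, 1) := by
      have e0 : i + 1 = p + (p-1)*0 + 0 := by omega
      rw [e0, snake_mid_val hp 0 0 (by omega) (by omega), if_pos (by omega)]
      simp
    rw [snake_lt (by omega : i < p), hB]
    dsimp only
    omega
  -- now p ≤ i
  rcases Nat.lt_or_ge (i+1) (p + (p-1)*(q-1)) with h2 | h2
  · obtain ⟨d, r, hi', hr, hd, hval⟩ := snake_mid (q := q) (i := i) hp (by omega) (by omega)
    rcases Nat.lt_or_ge (r+1) (p-1) with hr1 | hr1
    · -- same column block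
      have e0 : i + 1 = p + (p-1)*d + (r+1) := by omega
      have hB := snake_mid_val (q := q) hp d (r+1) hr1 hd
      rw [← e0] at hB
      by_cases hpar : (d+1) % 2 = 1
      · rw [if_pos hpar] at hval hB
        rw [hval, hB]; dsimp only; omega
      · rw [if_neg hpar] at hval hB
        rw [hval, hB]; dsimp only; omega
    · -- r + 1 = p - 1 : move to next block
      have hrr : r + 1 = p - 1 := by omega
      have hexp : (p-1)*(d+1) = (p-1)*d + (p-1) := by ring
      have e0 : i + 1 = p + (p-1)*(d+1) + 0 := by omega
      have hd1 : d + 1 < q - 1 := by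
        by_contra hcon
        have hde : d + 1 = q - 1 := by omega
        have hfe : (p-1)*(d+1) = (p-1)*(q-1) := by rw [hde]
        omega
      have hB := snake_mid_val (q := q) hp (d+1) 0 (by omega) hd1
      rw [← e0] at hB
      by_cases hpar : (d+1) % 2 = 1
      · rw [if_pos hpar] at hval
        rw [if_neg (by omega)] at hB
        rw [hval, hB]; dsimp only; omega
      · rw [if_neg hpar] at hval
        rw [if_pos (by omega)] at hB
        rw [hval, hB]; dsimp only; omega
  rcases Nat.eq_or_lt_of_le h2 with h3 | h3
  · -- i+1 enters the last range; i is mid with d = q-2, r = p-2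
    have hexp : (p-1)*(q-1) = (p-1)*(q-2) + (p-1) := by
      have e1 : q - 1 = (q-2) + 1 := by omega
      rw [e1]; ring
    have hi' : i = p + (p-1)*(q-2) + (p-2) := by omega
    have hA : snake p q i = (1, q-1) := by
      rw [hi', snake_mid_val hp (q-2) (p-2) (by omega) (by omega)]
      rw [if_pos (by omega)]
      have e1 : p - 1 - (p-2) = 1 := by omega
      have e2 : q - 2 + 1 = q - 1 := by omega
      rw [e1, e2]
    have hB : snake p q (i+1) = (0, q-1) := by
      rw [snake_last (by omega)]
      have e1 : i + 1 - p - (p-1)*(q-1) = 0 := by omega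
      rw [e1]
      simp
    rw [hA, hB]; dsimp only; omega
  · -- both in last range
    have hlast : p + (p-1)*(q-1) ≤ i := by omega
    rw [snake_last hlast, snake_last (by omega)]
    dsimp only
    omega


lemma grid_adj {p q : ℕ} (x y x' y' : ℕ) (hx : x < p) (hy : y < q) (hx' : x' < p) (hy' : y' < q)
    (h : (x = x' ∧ (y + 1 = y' ∨ y' + 1 = y)) ∨ (y = y' ∧ (x + 1 = x' ∨ x' + 1 = x))) :
    (SimpleGraph.pathGraph p □ SimpleGraph.pathGraph q).Adj (⟨x,hx⟩, ⟨y,hy⟩) (⟨x',hx'⟩, ⟨y',hy'⟩) := by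
  rw [SimpleGraph.boxProd_adj]
  rcases h with ⟨hxx, hyy⟩ | ⟨hyy, hxx⟩
  · right
    refine ⟨?_, ?_⟩
    · rw [SimpleGraph.pathGraph_adj]
      exact hyy
    · exact Fin.ext hxx
  · left
    refine ⟨?_, ?_⟩
    · rw [SimpleGraph.pathGraph_adj]
      exact hxx
    · exact Fin.ext hyy

lemma grid_cycle_data (p q : ℕ) (hp : 2 ≤ p) (hq : 2 ≤ q) (hq2 : Even q) :
    ∃ g : ℕ → Fin p × Fin q,
      (∀ k l, k < p*q → l < p*q → g k = g l → k = l) ∧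
      (∀ k, k + 1 < p*q → (SimpleGraph.pathGraph p □ SimpleGraph.pathGraph q).Adj (g k) (g (k+1))) ∧
      (SimpleGraph.pathGraph p □ SimpleGraph.pathGraph q).Adj (g (p*q-1)) (g 0) := by
  have hp0 : 0 < p := by omega
  have hq0 : 0 < q := by omega
  refine ⟨fun i => (⟨(snake p q i).1 % p, Nat.mod_lt _ hp0⟩, ⟨(snake p q i).2 % q, Nat.mod_lt _ hq0⟩),
    ?_, ?_, ?_⟩
  · intro k l hk hl hkl
    have hbk := snake_bounds hp hq hk
    have hbl := snake_bounds hp hq hl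
    rw [Prod.mk.injEq, Fin.mk.injEq, Fin.mk.injEq,
      Nat.mod_eq_of_lt hbk.1, Nat.mod_eq_of_lt hbk.2,
      Nat.mod_eq_of_lt hbl.1, Nat.mod_eq_of_lt hbl.2] at hkl
    have hsnake : snake p q k = snake p q l := Prod.ext hkl.1 hkl.2
    have := rank_snake hp hq hk
    rw [hsnake, rank_snake hp hq hl] at this
    omega
  · intro k hk
    have hb1 := snake_bounds hp hq (by omega : k < p*q)
    have hb2 := snake_bounds hp hq hk
    apply grid_adj
    rw [Nat.mod_eq_of_lt hb1.1, Nat.mod_eq_of_lt hb1.2,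
      Nat.mod_eq_of_lt hb2.1, Nat.mod_eq_of_lt hb2.2]
    exact snake_step hp hq hq2 hk
  · apply grid_adj
    rw [snake_wrap hp hq, snake_zero hp]
    dsimp only
    have h1 : 1 % q = 1 := Nat.mod_eq_of_lt (by omega)
    have h2 : 0 % q = 0 := Nat.zero_mod q
    have h3 : 0 % p = 0 := Nat.zero_mod p
    omega

lemma swap_adj {α β : Type*} {G : SimpleGraph α} {H : SimpleGraph β} {a b : α × β}
    (h : (G □ H).Adj a b) : (H □ G).Adj a.swap b.swap := by
  rw [SimpleGraph.boxProd_adj] at h ⊢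
  exact h.symm



end RCurv

open RCurv in
/-- For `m, n > 1` with `m * n` even, the grid graph `P_n □ P_m` is resistance positive. -/
theorem gridGraph_isRP (n m : ℕ) (hn : 1 < n) (hm : 1 < m) (hmn : Even (m * n)) :
    IsRP (SimpleGraph.pathGraph n □ SimpleGraph.pathGraph m) := by
  have h4 : 2 * 2 ≤ n * m := Nat.mul_le_mul (by omega) (by omega)
  rcases Nat.even_mul.mp hmn with he | he
  · -- m even
    obtain ⟨g, hinj, hadj, hwrap⟩ := grid_cycle_data n m (by omega) (by omega) he
    exact cycle_gives_nat _ (n*m) (by omega)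
      (by simp) g hinj hadj hwrap
  · -- n even : use the swapped grid
    obtain ⟨g, hinj, hadj, hwrap⟩ := grid_cycle_data m n (by omega) (by omega) he
    have h5 : 2 * 2 ≤ m * n := Nat.mul_le_mul (by omega) (by omega)
    refine cycle_gives_nat _ (m*n) (by omega)
      (by simp [Nat.mul_comm]) (fun i => (g i).swap) ?_ ?_ ?_
    · intro k l hk hl hkl
      exact hinj k l hk hl (Prod.swap_injective hkl)
    · intro k hk
      exact swap_adj (hadj k hk)
    · exact swap_adj hwrap
end

section
/- Let G = (V, E) be a finite simple connected loopless graph that is resistance nonnegative (RN). If G has a cut vertex x (that is, G − x is disconnected), then G is isomorphic to the path graph on |V| vertices. -/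
open scoped Classical

namespace RCurv

section Aux
set_option linter.unusedSectionVars false
open SimpleGraph

variable {V : Type*} [Fintype V] [DecidableEq V]

lemma sdiff_single_adj {G : SimpleGraph V} {e : Sym2 V} {a b : V} :
    (G \ fromEdgeSet {e}).Adj a b ↔ G.Adj a b ∧ s(a, b) ≠ e := by
  simp only [sdiff_adj, fromEdgeSet_adj, Set.mem_singleton_iff, not_and]
  constructor
  · rintro ⟨h, h2⟩
    exact ⟨h, fun he => (h2 he) h.ne⟩
  · rintro ⟨h, h2⟩
    exact ⟨h, fun he _ => h2 he⟩

lemma reachable_delete_of_reachable {G : SimpleGraph V} {v w : V}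
    (h : (G \ fromEdgeSet {s(v, w)}).Reachable v w) {a b : V} (p : G.Walk a b) :
    (G \ fromEdgeSet {s(v, w)}).Reachable a b := by
  induction p with
  | nil => exact Reachable.refl _
  | cons hadj q ih =>
    rename_i x y z
    refine Reachable.trans ?_ ih
    by_cases he : s(x, y) = s(v, w)
    · rw [Sym2.eq_iff] at he
      rcases he with ⟨rfl, rfl⟩ | ⟨rfl, rfl⟩
      · exact h
      · exact h.symm
    · exact Adj.reachable (sdiff_single_adj.2 ⟨hadj, he⟩)

lemma connected_delete_edge {G : SimpleGraph V} (hG : G.Connected) {v w : V}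
    (h : (G \ fromEdgeSet {s(v, w)}).Reachable v w) : (G \ fromEdgeSet {s(v, w)}).Connected := by
  have : Nonempty V := hG.nonempty
  exact ⟨fun a b => reachable_delete_of_reachable h ((hG.preconnected a b).some)⟩

lemma edgeSet_sdiff_single {G : SimpleGraph V} {e : Sym2 V} (he : e ∈ G.edgeSet) :
    (G \ fromEdgeSet {e}).edgeSet = G.edgeSet \ {e} := by
  rw [edgeSet_sdiff, edgeSet_fromEdgeSet]
  ext f
  simp only [Set.mem_diff, Set.mem_singleton_iff, Set.mem_setOf_eq, not_and, not_not]
  constructor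
  · rintro ⟨hf, h2⟩
    refine ⟨hf, fun hfe => ?_⟩
    subst hfe
    exact absurd (h2 rfl) (G.not_isDiag_of_mem_edgeSet hf)
  · rintro ⟨hf, h2⟩
    exact ⟨hf, fun hfe => absurd hfe h2⟩

lemma exists_tree_le (G : SimpleGraph V) (hG : G.Connected) : ∃ H ≤ G, H.IsTree := by
  classical
  generalize hn : G.edgeSet.ncard = n
  induction n using Nat.strong_induction_on generalizing G with
  | _ n ih =>
    by_cases hac : G.IsAcyclic
    · exact ⟨G, le_rfl, ⟨hG, hac⟩⟩
    · simp only [IsAcyclic, not_forall] at hac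
      obtain ⟨u, p, hp⟩ := hac
      rw [not_not] at hp
      have hne : p.edges ≠ [] := by
        intro h0
        have h3 := hp.three_le_length
        have : p.length = 0 := by simpa using congrArg List.length h0
        omega
      obtain ⟨e, he⟩ := List.exists_mem_of_ne_nil _ hne
      induction e using Sym2.ind with
      | _ a b =>
        have hadj : G.Adj a b := p.adj_of_mem_edges he
        have hreach : (G \ fromEdgeSet {s(a, b)}).Reachable a b :=
          (adj_and_reachable_delete_edges_iff_exists_cycle.2 ⟨u, p, hp, he⟩).2
        have hconn : (G \ fromEdgeSet {s(a, b)}).Connected := connected_delete_edge hG hreach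
        have hlt : (G \ fromEdgeSet {s(a, b)}).edgeSet.ncard < n := by
          rw [edgeSet_sdiff_single (G.mem_edgeSet.2 hadj), ← hn]
          exact Set.ncard_diff_singleton_lt_of_mem (G.mem_edgeSet.2 hadj) (Set.toFinite _)
        obtain ⟨H, hH1, hH2⟩ := ih _ hlt _ hconn rfl
        exact ⟨H, hH1.trans (by simp), hH2⟩

lemma tree_card_ncard {G : SimpleGraph V} (hG : G.IsTree) :
    G.edgeSet.ncard + 1 = Fintype.card V := by
  classical
  have inst : Fintype G.edgeSet := (Set.toFinite _).fintype
  rw [Set.ncard_eq_toFinset_card' ]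
  have := hG.card_edgeFinset (V := V)
  rwa [edgeFinset] at this

lemma isTree_of_connected_card {G : SimpleGraph V} (hG : G.Connected)
    (hcard : G.edgeSet.ncard + 1 = Fintype.card V) : G.IsTree := by
  obtain ⟨H, hle, hH⟩ := exists_tree_le G hG
  have hc := tree_card_ncard hH
  have hsub : H.edgeSet ⊆ G.edgeSet := edgeSet_mono hle
  have : H.edgeSet = G.edgeSet :=
    Set.eq_of_subset_of_ncard_le hsub (by omega) (Set.toFinite _)
  rwa [edgeSet_inj.1 this] at hH

section ST
set_option linter.unusedSectionVars false

open SimpleGraph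

lemma mem_spanningTrees {G : SimpleGraph V} {T : Finset (Sym2 V)} :
    T ∈ spanningTrees G ↔ IsSpanningTree G T := by
  simp [spanningTrees]

lemma edgeSet_of_st {G : SimpleGraph V} {T : Finset (Sym2 V)} (hT : (T : Set (Sym2 V)) ⊆ G.edgeSet) :
    (fromEdgeSet (T : Set (Sym2 V))).edgeSet = (T : Set (Sym2 V)) := by
  rw [edgeSet_fromEdgeSet]
  ext e
  simp only [Set.mem_diff, Set.mem_setOf_eq, Finset.mem_coe, and_iff_left_iff_imp]
  intro he
  exact G.not_isDiag_of_mem_edgeSet (hT he)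

lemma st_card {G : SimpleGraph V} {T : Finset (Sym2 V)} (hT : IsSpanningTree G T) :
    T.card + 1 = Fintype.card V := by
  have h := tree_card_ncard hT.2
  rwa [edgeSet_of_st hT.1, Set.ncard_coe_finset] at h

lemma spanningTrees_nonempty {G : SimpleGraph V} (hG : G.Connected) :
    (spanningTrees G).Nonempty := by
  obtain ⟨H, hle, hH⟩ := exists_tree_le G hG
  refine ⟨H.edgeSet.toFinset, mem_spanningTrees.2 ⟨?_, ?_⟩⟩
  · rw [Set.coe_toFinset]
    exact edgeSet_mono hle
  · rw [Set.coe_toFinset, fromEdgeSet_edgeSet]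
    exact hH

lemma st_adj {G : SimpleGraph V} {T : Finset (Sym2 V)} (hT : (T : Set (Sym2 V)) ⊆ G.edgeSet) {a b : V} :
    (fromEdgeSet (T : Set (Sym2 V))).Adj a b ↔ s(a, b) ∈ T := by
  rw [fromEdgeSet_adj]
  simp only [Finset.mem_coe, and_iff_left_iff_imp]
  intro h hab
  exact G.not_isDiag_of_mem_edgeSet (hT h) (by rw [hab]; simp)

/-- `T`-degree of `y` equals card of the neighborFinset of the tree. -/
lemma st_deg_eq {G : SimpleGraph V} {T : Finset (Sym2 V)} (hT : (T : Set (Sym2 V)) ⊆ G.edgeSet) (y : V) :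
    (T.filter fun e => y ∈ e).card =
      ((fromEdgeSet (T : Set (Sym2 V))).neighborFinset y).card := by
  classical
  refine (Finset.card_bij (fun a _ => s(y, a)) ?_ ?_ ?_).symm
  · intro a ha
    rw [mem_neighborFinset, st_adj hT] at ha
    simp [ha, Finset.mem_filter]
  · intro a ha b hb hab
    rw [Sym2.congr_right] at hab
    exact hab
  · intro e he
    rw [Finset.mem_filter] at he
    obtain ⟨he, hy⟩ := he
    obtain ⟨a, rfl⟩ := Sym2.mem_iff_exists.1 hy
    refine ⟨a, ?_, rfl⟩
    rw [mem_neighborFinset, st_adj hT]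
    exact he

end ST
end Aux
section Weights
set_option linter.unusedSectionVars false
open SimpleGraph

variable {V : Type*} [Fintype V] [DecidableEq V] {G : SimpleGraph V} {c : Sym2 V → ℝ}

lemma st_prod_pos (hc : ∀ e ∈ G.edgeSet, 0 < c e) {T : Finset (Sym2 V)}
    (hT : IsSpanningTree G T) : 0 < ∏ t ∈ T, c t :=
  Finset.prod_pos fun t ht => hc t (hT.1 ht)

lemma W_pos (hG : G.Connected) (hc : ∀ e ∈ G.edgeSet, 0 < c e) :
    0 < ∑ T ∈ spanningTrees G, ∏ t ∈ T, c t :=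
  Finset.sum_pos (fun T hT => st_prod_pos hc (mem_spanningTrees.1 hT))
    (spanningTrees_nonempty hG)

lemma card_filter_neighbor {T : Finset (Sym2 V)} (hT : IsSpanningTree G T) (v : V) :
    ((G.neighborFinset v).filter fun u => s(u, v) ∈ T).card
      = (T.filter fun e => v ∈ e).card := by
  classical
  refine Finset.card_bij (fun u _ => s(u, v)) ?_ ?_ ?_
  · intro u hu
    rw [Finset.mem_filter] at hu ⊢
    exact ⟨hu.2, by simp⟩
  · intro u hu u' hu' h
    rwa [Sym2.congr_left] at h
  · intro e he
    rw [Finset.mem_filter] at he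
    obtain ⟨heT, hv⟩ := he
    obtain ⟨a, rfl⟩ := Sym2.mem_iff_exists.1 hv
    refine ⟨a, ?_, Sym2.eq_swap⟩
    rw [Finset.mem_filter, mem_neighborFinset]
    have hadj : G.Adj v a := G.mem_edgeSet.1 (hT.1 heT)
    exact ⟨hadj, by rwa [Sym2.eq_swap]⟩

lemma sum_relRes_eq (v : V) :
    ∑ u ∈ G.neighborFinset v, relRes G c s(u, v)
      = (∑ T ∈ spanningTrees G, ((T.filter fun e => v ∈ e).card : ℝ) * ∏ t ∈ T, c t) /
        (∑ T ∈ spanningTrees G, ∏ t ∈ T, c t) := by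
  classical
  unfold relRes
  rw [← Finset.sum_div]
  congr 1
  have : ∀ u ∈ G.neighborFinset v,
      (∑ T ∈ (spanningTrees G).filter (fun T => s(u, v) ∈ T), ∏ t ∈ T, c t)
        = ∑ T ∈ spanningTrees G, if s(u, v) ∈ T then ∏ t ∈ T, c t else 0 := by
    intro u _
    rw [Finset.sum_filter]
  rw [Finset.sum_congr rfl this, Finset.sum_comm]
  refine Finset.sum_congr rfl fun T hT => ?_
  rw [← Finset.sum_filter, Finset.sum_const, nsmul_eq_mul,
    card_filter_neighbor (mem_spanningTrees.1 hT)]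

lemma st_deg_eq_two (hG : G.Connected) (hc : ∀ e ∈ G.edgeSet, 0 < c e) {v : V}
    (hcurv : 0 ≤ curv G c v)
    (h2 : ∀ T ∈ spanningTrees G, 2 ≤ (T.filter fun e => v ∈ e).card) :
    ∀ T ∈ spanningTrees G, (T.filter fun e => v ∈ e).card = 2 := by
  classical
  set W := ∑ T ∈ spanningTrees G, ∏ t ∈ T, c t with hW
  have hWpos : 0 < W := W_pos hG hc
  have hsum : ∑ u ∈ G.neighborFinset v, relRes G c s(u, v) ≤ 2 := by
    unfold curv at hcurv
    nlinarith
  rw [sum_relRes_eq v, div_le_iff₀ hWpos] at hsum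
  have hle : ∀ T ∈ spanningTrees G,
      (2 : ℝ) * ∏ t ∈ T, c t ≤ ((T.filter fun e => v ∈ e).card : ℝ) * ∏ t ∈ T, c t := by
    intro T hT
    have hp := st_prod_pos hc (mem_spanningTrees.1 hT)
    have : (2 : ℝ) ≤ ((T.filter fun e => v ∈ e).card : ℝ) := by
      exact_mod_cast h2 T hT
    nlinarith
  have htot : ∑ T ∈ spanningTrees G, (2 : ℝ) * ∏ t ∈ T, c t = 2 * W := by
    rw [hW, Finset.mul_sum]
  have heq : ∑ T ∈ spanningTrees G, (2 : ℝ) * ∏ t ∈ T, c t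
      = ∑ T ∈ spanningTrees G, ((T.filter fun e => v ∈ e).card : ℝ) * ∏ t ∈ T, c t := by
    refine le_antisymm (Finset.sum_le_sum hle) ?_
    rw [htot]
    exact hsum
  have := (Finset.sum_eq_sum_iff_of_le hle).1 heq
  intro T hT
  have h := (this T hT).symm
  have hp := st_prod_pos hc (mem_spanningTrees.1 hT)
  have : ((T.filter fun e => v ∈ e).card : ℝ) = 2 := by
    exact mul_right_cancel₀ hp.ne' h
  exact_mod_cast this

end Weights
section Walks
set_option linter.unusedSectionVars false
open SimpleGraph

variable {V : Type*} [Fintype V] [DecidableEq V] {G : SimpleGraph V} {K : SimpleGraph V}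

/-- In a subgraph `K ≤ G`, any path from `a ∈ A` to `y` stays in `A ∪ {y}`,
given that `A` is closed except towards `y` on the `B` side. -/
lemma path_stay (hKG : K ≤ G) (y : V) (A B : Finset V)
    (hAy : y ∉ A) (hcover : ∀ v : V, v = y ∨ v ∈ A ∨ v ∈ B)
    (hAB : ∀ a ∈ A, ∀ b ∈ B, ¬ G.Adj a b) :
    ∀ {a b : V} (p : K.Walk a b), b = y → p.IsPath → a ∈ A → ∀ z ∈ p.support, z = y ∨ z ∈ A := by
  intro a b p
  induction p with
  | nil => rintro rfl _ ha z hz; simp at hz; exact Or.inl hz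
  | cons h q ih =>
    rename_i u w hw
    rintro rfl hp ha z hz
    rw [SimpleGraph.Walk.support_cons, List.mem_cons] at hz
    rcases hz with rfl | hz
    · exact Or.inr ha
    · rcases hcover w with rfl | hw | hw
      · -- next vertex is y, so q is a path from y to y, hence nil
        have : q = SimpleGraph.Walk.nil := SimpleGraph.Walk.isPath_iff_eq_nil.1 hp.of_cons
        subst this
        simp at hz
        exact Or.inl hz
      · exact ih rfl hp.of_cons hw z hz
      · exact absurd (hKG h) (hAB u ha w hw)

/-- `y` has a `K`-neighbor in `A`, where `K` is connected. -/
lemma exists_nbr_in_A (hKG : K ≤ G) (hK : K.Connected) (y : V) (A B : Finset V)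
    (hAy : y ∉ A) (hcover : ∀ v : V, v = y ∨ v ∈ A ∨ v ∈ B)
    (hAB : ∀ a ∈ A, ∀ b ∈ B, ¬ G.Adj a b) {a : V} (ha : a ∈ A) :
    ∃ z ∈ A, K.Adj y z := by
  classical
  obtain ⟨p0⟩ := hK.preconnected a y
  let p := p0.toPath
  have hp : (p : K.Walk a y).IsPath := p.isPath
  have hay : a ≠ y := fun h => hAy (h ▸ ha)
  have hnn : ¬ (p : K.Walk a y).reverse.Nil := by
    rw [SimpleGraph.Walk.nil_iff_length_eq, SimpleGraph.Walk.length_reverse]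
    intro h0
    exact hay (SimpleGraph.Walk.eq_of_length_eq_zero h0)
  obtain ⟨z, hadj, q, hq⟩ := SimpleGraph.Walk.not_nil_iff.1 hnn
  have hz : z ∈ (p : K.Walk a y).support := by
    have : z ∈ (p : K.Walk a y).reverse.support := by
      rw [hq]; simp
    rwa [SimpleGraph.Walk.support_reverse, List.mem_reverse] at this
  rcases path_stay hKG y A B hAy hcover hAB (p : K.Walk a y) rfl hp ha z hz with rfl | hzA
  · exact absurd rfl hadj.ne
  · exact ⟨z, hzA, hadj⟩

end Walks
section Main
set_option linter.unusedSectionVars false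
open SimpleGraph

variable {V : Type*} [Fintype V] [DecidableEq V] {G : SimpleGraph V} {c : Sym2 V → ℝ}

/-- Every spanning tree has exactly 2 edges at `y`, given a separation `(A, B)` at `y`. -/
lemma st_deg_y_eq_two (hG : G.Connected) (hc : ∀ e ∈ G.edgeSet, 0 < c e)
    (hcurv : ∀ v : V, 0 ≤ curv G c v) (y : V) (A B : Finset V)
    (hAy : y ∉ A) (hBy : y ∉ B) (hdisj : Disjoint A B)
    (hcover : ∀ v : V, v = y ∨ v ∈ A ∨ v ∈ B)
    (hA : A.Nonempty) (hB : B.Nonempty)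
    (hAB : ∀ a ∈ A, ∀ b ∈ B, ¬ G.Adj a b) :
    ∀ T ∈ spanningTrees G, (T.filter fun e => y ∈ e).card = 2 := by
  classical
  have hcover' : ∀ v : V, v = y ∨ v ∈ B ∨ v ∈ A := by
    intro v; rcases hcover v with h | h | h <;> tauto
  have hBA : ∀ a ∈ B, ∀ b ∈ A, ¬ G.Adj a b := by
    intro b hb a ha hadj; exact hAB a ha b hb hadj.symm
  have hnbrs : ∀ T ∈ spanningTrees G,
      ∃ zA ∈ A, ∃ zB ∈ B, (SimpleGraph.fromEdgeSet (T : Set (Sym2 V))).Adj y zA ∧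
        (SimpleGraph.fromEdgeSet (T : Set (Sym2 V))).Adj y zB := by
    intro T hT
    have hT' := mem_spanningTrees.1 hT
    have hKG : SimpleGraph.fromEdgeSet (T : Set (Sym2 V)) ≤ G := by
      rw [← SimpleGraph.fromEdgeSet_edgeSet (G := G)]
      exact SimpleGraph.fromEdgeSet_mono hT'.1
    obtain ⟨zA, hzA, hadjA⟩ := exists_nbr_in_A hKG hT'.2.isConnected y A B hAy hcover hAB
      hA.choose_spec
    obtain ⟨zB, hzB, hadjB⟩ := exists_nbr_in_A hKG hT'.2.isConnected y B A hBy hcover' hBA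
      hB.choose_spec
    exact ⟨zA, hzA, zB, hzB, hadjA, hadjB⟩
  have h2 : ∀ T ∈ spanningTrees G, 2 ≤ (T.filter fun e => y ∈ e).card := by
    intro T hT
    have hT' := mem_spanningTrees.1 hT
    obtain ⟨zA, hzA, zB, hzB, hadjA, hadjB⟩ := hnbrs T hT
    rw [st_deg_eq hT'.1 y]
    have hsub : ({zA, zB} : Finset V) ⊆
        (SimpleGraph.fromEdgeSet (T : Set (Sym2 V))).neighborFinset y := by
      intro z hz
      rw [Finset.mem_insert, Finset.mem_singleton] at hz
      rcases hz with rfl | rfl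
      · rwa [SimpleGraph.mem_neighborFinset]
      · rwa [SimpleGraph.mem_neighborFinset]
    have hne : zA ≠ zB := by
      intro h; subst h; exact (Finset.disjoint_left.1 hdisj) hzA hzB
    calc 2 = ({zA, zB} : Finset V).card := by rw [Finset.card_pair hne]
      _ ≤ _ := Finset.card_le_card hsub
  exact st_deg_eq_two hG hc (hcurv y) h2

/-- MAIN LEMMA: at a separation `(A, B)` of `G - y`, the vertex `y` has a unique
neighbor on the `A` side. -/
lemma unique_nbr (hG : G.Connected) (hc : ∀ e ∈ G.edgeSet, 0 < c e)
    (hcurv : ∀ v : V, 0 ≤ curv G c v) (y : V) (A B : Finset V)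
    (hAy : y ∉ A) (hBy : y ∉ B) (hdisj : Disjoint A B)
    (hcover : ∀ v : V, v = y ∨ v ∈ A ∨ v ∈ B)
    (hA : A.Nonempty) (hB : B.Nonempty)
    (hAB : ∀ a ∈ A, ∀ b ∈ B, ¬ G.Adj a b) :
    ∃ a ∈ A, G.Adj y a ∧ ∀ a' ∈ A, G.Adj y a' → a' = a := by
  classical
  have hdeg2 := st_deg_y_eq_two hG hc hcurv y A B hAy hBy hdisj hcover hA hB hAB
  -- the neighborhood of y in any spanning tree is exactly {zA, zB}
  have hnbhd : ∀ T ∈ spanningTrees G, ∀ zA ∈ A, ∀ zB ∈ B,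
      (SimpleGraph.fromEdgeSet (T : Set (Sym2 V))).Adj y zA →
      (SimpleGraph.fromEdgeSet (T : Set (Sym2 V))).Adj y zB →
      (SimpleGraph.fromEdgeSet (T : Set (Sym2 V))).neighborFinset y = {zA, zB} := by
    intro T hT zA hzA zB hzB hadjA hadjB
    have hT' := mem_spanningTrees.1 hT
    have hcard : ((SimpleGraph.fromEdgeSet (T : Set (Sym2 V))).neighborFinset y).card = 2 := by
      rw [← st_deg_eq hT'.1 y]; exact hdeg2 T hT
    have hsub : ({zA, zB} : Finset V) ⊆
        (SimpleGraph.fromEdgeSet (T : Set (Sym2 V))).neighborFinset y := by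
      intro z hz
      rw [Finset.mem_insert, Finset.mem_singleton] at hz
      rcases hz with rfl | rfl
      · rwa [SimpleGraph.mem_neighborFinset]
      · rwa [SimpleGraph.mem_neighborFinset]
    have hne : zA ≠ zB := by
      intro h; subst h; exact (Finset.disjoint_left.1 hdisj) hzA hzB
    refine (Finset.eq_of_subset_of_card_le hsub ?_).symm
    rw [hcard, Finset.card_pair hne]
  have hcover' : ∀ v : V, v = y ∨ v ∈ B ∨ v ∈ A := by
    intro v; rcases hcover v with h | h | h <;> tauto
  have hBA : ∀ a ∈ B, ∀ b ∈ A, ¬ G.Adj a b := by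
    intro b hb a ha hadj; exact hAB a ha b hb hadj.symm
  obtain ⟨T₀, hT₀⟩ := spanningTrees_nonempty hG
  have hT₀' := mem_spanningTrees.1 hT₀
  have hKG : SimpleGraph.fromEdgeSet (T₀ : Set (Sym2 V)) ≤ G := by
    rw [← SimpleGraph.fromEdgeSet_edgeSet (G := G)]
    exact SimpleGraph.fromEdgeSet_mono hT₀'.1
  obtain ⟨zA, hzA, hadjA⟩ := exists_nbr_in_A hKG hT₀'.2.isConnected y A B hAy hcover hAB
    hA.choose_spec
  obtain ⟨zB, hzB, hadjB⟩ := exists_nbr_in_A hKG hT₀'.2.isConnected y B A hBy hcover' hBA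
    hB.choose_spec
  refine ⟨zA, hzA, hKG hadjA, ?_⟩
  intro a' ha' hadj'
  by_contra hne'
  have hnbhd₀ := hnbhd T₀ hT₀ zA hzA zB hzB hadjA hadjB
  have ha'zB : a' ≠ zB := by
    intro h; subst h; exact (Finset.disjoint_left.1 hdisj) ha' hzB
  have hsnot : s(y, a') ∉ T₀ := by
    intro hmem
    have hadjK : (SimpleGraph.fromEdgeSet (T₀ : Set (Sym2 V))).Adj y a' :=
      (st_adj hT₀'.1).2 hmem
    have ha'mem : a' ∈ (SimpleGraph.fromEdgeSet (T₀ : Set (Sym2 V))).neighborFinset y := by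
      rwa [SimpleGraph.mem_neighborFinset]
    rw [hnbhd₀, Finset.mem_insert, Finset.mem_singleton] at ha'mem
    rcases ha'mem with h | h
    · exact hne' h
    · exact ha'zB h
  have ha'y : a' ≠ y := fun h => hAy (h ▸ ha')
  -- path in the tree from a' to y
  obtain ⟨p0⟩ := hT₀'.2.isConnected.preconnected a' y
  set p : (SimpleGraph.fromEdgeSet (T₀ : Set (Sym2 V))).Walk a' y := p0.toPath.val with hpdef
  have hp : p.IsPath := p0.toPath.prop
  have hnn : ¬ p.Nil := by
    rw [SimpleGraph.Walk.nil_iff_length_eq]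
    intro h0
    exact ha'y (SimpleGraph.Walk.eq_of_length_eq_zero h0)
  obtain ⟨z, hz_adj, q, hpq⟩ := SimpleGraph.Walk.not_nil_iff.1 hnn
  have hzy : z ≠ y := by
    intro h; subst h
    exact hsnot (by rw [Sym2.eq_swap]; exact (st_adj hT₀'.1).1 hz_adj)
  have he₀T : s(a', z) ∈ T₀ := (st_adj hT₀'.1).1 hz_adj
  have hya' : y ≠ a' := hadj'.ne
  have hyz : y ≠ z := Ne.symm hzy
  have hnee₀ : s(y, a') ≠ s(a', z) := by
    intro h
    have hy1 : y ∈ s(y, a') := Sym2.mem_mk_left y a'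
    rw [h, Sym2.mem_iff] at hy1
    rcases hy1 with h1 | h1
    · exact hya' h1
    · exact hyz h1
  set T' : Finset (Sym2 V) := insert s(y, a') (T₀.erase s(a', z)) with hT'def
  have hT'sub : (T' : Set (Sym2 V)) ⊆ G.edgeSet := by
    intro f hf
    rw [Finset.mem_coe, hT'def, Finset.mem_insert] at hf
    rcases hf with rfl | hf
    · exact G.mem_edgeSet.2 hadj'
    · exact hT₀'.1 (Finset.mem_of_mem_erase hf)
  have hT'card : T'.card = T₀.card := by
    rw [hT'def, Finset.card_insert_of_notMem, Finset.card_erase_of_mem he₀T]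
    · exact Nat.sub_add_cancel (Finset.card_pos.2 ⟨_, he₀T⟩)
    · intro h
      exact hsnot (Finset.mem_of_mem_erase h)
  set L : SimpleGraph V := SimpleGraph.fromEdgeSet ((insert s(y, a') T₀ : Finset (Sym2 V)) :
    Set (Sym2 V)) with hLdef
  have hKL : SimpleGraph.fromEdgeSet (T₀ : Set (Sym2 V)) ≤ L := by
    apply SimpleGraph.fromEdgeSet_mono
    intro f hf
    rw [Finset.mem_coe] at hf
    rw [Finset.coe_insert]
    exact Set.mem_insert_iff.2 (Or.inr hf)
  have hLconn : L.Connected := hT₀'.2.isConnected.mono hKL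
  have hp' : ∀ f ∈ p.edges, f ∈ L.edgeSet := by
    intro f hf
    exact SimpleGraph.edgeSet_mono hKL (p.edges_subset_edgeSet hf)
  set p' : L.Walk a' y := p.transfer L hp' with hp'def
  have hp'path : p'.IsPath := hp.transfer hp'
  have hyadjL : L.Adj y a' := by
    rw [hLdef, SimpleGraph.fromEdgeSet_adj]
    exact ⟨by rw [Finset.coe_insert]; exact Set.mem_insert _ _, hya'⟩
  have hpedges : ∀ f ∈ p.edges, f ∈ T₀ := by
    intro f hf
    have := p.edges_subset_edgeSet hf
    rwa [edgeSet_of_st hT₀'.1, Finset.mem_coe] at this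
  have hcyc : (SimpleGraph.Walk.cons hyadjL p').IsCycle := by
    rw [SimpleGraph.Walk.cons_isCycle_iff]
    refine ⟨hp'path, ?_⟩
    rw [hp'def, SimpleGraph.Walk.edges_transfer]
    intro hmem
    exact hsnot (hpedges _ hmem)
  have he₀cyc : s(a', z) ∈ (SimpleGraph.Walk.cons hyadjL p').edges := by
    rw [SimpleGraph.Walk.edges_cons, hp'def, SimpleGraph.Walk.edges_transfer]
    refine List.mem_cons_of_mem _ ?_
    rw [hpq, SimpleGraph.Walk.edges_cons]
    exact List.mem_cons_self
  have hadjL : L.Adj a' z ∧ (L \ SimpleGraph.fromEdgeSet {s(a', z)}).Reachable a' z :=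
    SimpleGraph.adj_and_reachable_delete_edges_iff_exists_cycle.2
      ⟨y, SimpleGraph.Walk.cons hyadjL p', hcyc, he₀cyc⟩
  have hconn' : (L \ SimpleGraph.fromEdgeSet {s(a', z)}).Connected :=
    connected_delete_edge hLconn hadjL.2
  have heq : L \ SimpleGraph.fromEdgeSet {s(a', z)}
      = SimpleGraph.fromEdgeSet (T' : Set (Sym2 V)) := by
    ext u v
    rw [sdiff_single_adj, hLdef, SimpleGraph.fromEdgeSet_adj, SimpleGraph.fromEdgeSet_adj]
    simp only [Finset.coe_insert, Set.mem_insert_iff, Finset.mem_coe, hT'def,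
      Finset.mem_insert, Finset.mem_erase]
    constructor
    · rintro ⟨⟨h1 | h1, h2⟩, h3⟩
      · exact ⟨Or.inl h1, h2⟩
      · exact ⟨Or.inr ⟨h3, h1⟩, h2⟩
    · rintro ⟨h1 | ⟨h1, h1'⟩, h2⟩
      · exact ⟨⟨Or.inl h1, h2⟩, h1 ▸ hnee₀⟩
      · exact ⟨⟨Or.inr h1', h2⟩, h1⟩
  have hT'st : IsSpanningTree G T' := by
    refine ⟨hT'sub, isTree_of_connected_card ?_ ?_⟩
    · rw [← heq]; exact hconn'
    · rw [edgeSet_of_st hT'sub, Set.ncard_coe_finset, hT'card]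
      exact st_card hT₀'
  have hT'mem : T' ∈ spanningTrees G := mem_spanningTrees.2 hT'st
  -- the new tree has y-degree at least 3, contradiction
  have hyzA : y ≠ zA := hadjA.ne
  have hyzB : y ≠ zB := hadjB.ne
  have hmemA : s(y, zA) ∈ T' := by
    rw [hT'def, Finset.mem_insert, Finset.mem_erase]
    refine Or.inr ⟨?_, (st_adj hT₀'.1).1 hadjA⟩
    intro h
    have hy1 : y ∈ s(y, zA) := Sym2.mem_mk_left y zA
    rw [h, Sym2.mem_iff] at hy1
    rcases hy1 with h1 | h1
    · exact hya' h1
    · exact hyz h1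
  have hmemB : s(y, zB) ∈ T' := by
    rw [hT'def, Finset.mem_insert, Finset.mem_erase]
    refine Or.inr ⟨?_, (st_adj hT₀'.1).1 hadjB⟩
    intro h
    have hy1 : y ∈ s(y, zB) := Sym2.mem_mk_left y zB
    rw [h, Sym2.mem_iff] at hy1
    rcases hy1 with h1 | h1
    · exact hya' h1
    · exact hyz h1
  have hmema' : s(y, a') ∈ T' := by
    rw [hT'def]; exact Finset.mem_insert_self _ _
  have hzAzB : zA ≠ zB := by
    intro h; subst h; exact (Finset.disjoint_left.1 hdisj) hzA hzB
  have hsub3 : ({a', zA, zB} : Finset V) ⊆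
      (SimpleGraph.fromEdgeSet (T' : Set (Sym2 V))).neighborFinset y := by
    intro w hw
    simp only [Finset.mem_insert, Finset.mem_singleton] at hw
    rw [SimpleGraph.mem_neighborFinset, st_adj hT'sub]
    rcases hw with rfl | rfl | rfl
    · exact hmema'
    · exact hmemA
    · exact hmemB
  have hcard3 : ({a', zA, zB} : Finset V).card = 3 := by
    rw [Finset.card_insert_of_notMem, Finset.card_pair hzAzB]
    simp only [Finset.mem_insert, Finset.mem_singleton]
    push_neg
    exact ⟨hne', ha'zB⟩
  have hle3 : 3 ≤ ((SimpleGraph.fromEdgeSet (T' : Set (Sym2 V))).neighborFinset y).card := by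
    rw [← hcard3]; exact Finset.card_le_card hsub3
  rw [← st_deg_eq hT'sub y] at hle3
  rw [hdeg2 T' hT'mem] at hle3
  omega

end Main
section Chain
set_option linter.unusedSectionVars false
open SimpleGraph

variable {V : Type*} [Fintype V] [DecidableEq V] {G : SimpleGraph V} {c : Sym2 V → ℝ}

lemma chain (hG : G.Connected) (hc : ∀ e ∈ G.edgeSet, 0 < c e)
    (hcurv : ∀ v : V, 0 ≤ curv G c v) :
    ∀ (k : ℕ) (y : V) (D : Finset V), D.card = k → y ∉ D → D.Nonempty →
      (∀ d ∈ D, ∀ v : V, G.Adj d v → v = y ∨ v ∈ D) →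
      ((insert y D)ᶜ : Finset V).Nonempty →
      ∃ f : Fin (k + 1) → V, Function.Injective f ∧ f 0 = y ∧
        (∀ i : Fin (k + 1), i ≠ 0 → f i ∈ D) ∧
        (∀ (i : ℕ) (h : i + 1 < k + 1), G.Adj (f ⟨i, by omega⟩) (f ⟨i + 1, h⟩)) ∧
        (∀ d ∈ D, G.Adj y d → ∀ (h1 : 1 < k + 1), d = f ⟨1, h1⟩) ∧
        (∀ i j : Fin (k + 1), i ≠ 0 → G.Adj (f i) (f j) →
          (i.val + 1 = j.val ∨ j.val + 1 = i.val)) := by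
  intro k
  induction k using Nat.strong_induction_on with
  | _ k ih =>
    intro y D hcard hyD hDne hclosed hcompl
    -- apply the main lemma with A = D, B = (insert y D)ᶜ
    have hyB : y ∉ ((insert y D)ᶜ : Finset V) := by
      simp [Finset.mem_compl]
    have hdisj : Disjoint D ((insert y D)ᶜ : Finset V) := by
      exact Disjoint.mono_left (Finset.subset_insert y D) disjoint_compl_right
    have hcover : ∀ v : V, v = y ∨ v ∈ D ∨ v ∈ ((insert y D)ᶜ : Finset V) := by
      intro v
      by_cases hv : v ∈ insert y D
      · rw [Finset.mem_insert] at hv; tauto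
      · exact Or.inr (Or.inr (Finset.mem_compl.2 hv))
    have hAB : ∀ a ∈ D, ∀ b ∈ ((insert y D)ᶜ : Finset V), ¬ G.Adj a b := by
      intro a ha b hb hadj
      rcases hclosed a ha b hadj with rfl | hbD
      · exact hyB hb
      · exact (Finset.mem_compl.1 hb) (Finset.mem_insert_of_mem hbD)
    obtain ⟨a, haD, hadj, huniq⟩ :=
      unique_nbr hG hc hcurv y D ((insert y D)ᶜ : Finset V) hyD hyB hdisj hcover hDne
        hcompl hAB
    have hk1 : 1 ≤ k := by
      rw [← hcard]
      exact Finset.card_pos.2 hDne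
    by_cases hk : k = 1
    · -- base case : D = {a}
      subst hk
      have hD : D = {a} := by
        apply Finset.eq_singleton_iff_unique_mem.2
        refine ⟨haD, ?_⟩
        intro b hb
        by_contra hba
        have h2 : 2 ≤ D.card := by
          have : ({b, a} : Finset V) ⊆ D := by
            intro w hw
            simp only [Finset.mem_insert, Finset.mem_singleton] at hw
            rcases hw with rfl | rfl
            · exact hb
            · exact haD
          calc 2 = ({b, a} : Finset V).card := (Finset.card_pair hba).symm
            _ ≤ D.card := Finset.card_le_card this
        omega
      refine ⟨fun i => if i.val = 0 then y else a, ?_, rfl, ?_, ?_, ?_, ?_⟩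
      · intro i j hij
        simp only at hij
        by_cases hi : i.val = 0 <;> by_cases hj : j.val = 0 <;>
          simp only [hi, hj, if_true, if_false, if_pos, if_neg] at hij
        · exact Fin.ext (by omega)
        · exact absurd hij hadj.ne
        · exact absurd hij.symm hadj.ne
        · exact Fin.ext (by omega)
      · intro i hi
        have : i.val ≠ 0 := fun h => hi (Fin.ext h)
        simp only [this, if_false, hD, Finset.mem_singleton, if_neg]
      · intro i h
        have hi0 : i = 0 := by omega
        subst hi0
        simpa using hadj
      · intro d hd _ h1
        rw [hD, Finset.mem_singleton] at hd
        subst hd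
        simp
      · intro i j hi hadj'
        have hi' : i.val ≠ 0 := fun h => hi (Fin.ext h)
        have hij : i.val = 1 := by omega
        by_cases hj : j.val = 0
        · right; omega
        · exfalso
          have hjj : j.val = 1 := by omega
          simp only [hi', hj, if_false, if_neg] at hadj'
          exact hadj'.ne rfl
    · -- inductive step
      have hk2 : 2 ≤ k := by omega
      have hclosed' : ∀ d ∈ D.erase a, ∀ v : V, G.Adj d v → v = a ∨ v ∈ D.erase a := by
        intro d hd v hadj'
        have hdD := Finset.mem_of_mem_erase hd
        rcases hclosed d hdD v hadj' with rfl | hvD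
        · exfalso
          have := huniq d hdD hadj'.symm
          exact (Finset.ne_of_mem_erase hd) this
        · by_cases hva : v = a
          · exact Or.inl hva
          · exact Or.inr (Finset.mem_erase.2 ⟨hva, hvD⟩)
      have hcompl' : ((insert a (D.erase a))ᶜ : Finset V).Nonempty := by
        rw [Finset.insert_erase haD]
        exact ⟨y, Finset.mem_compl.2 hyD⟩
      obtain ⟨f', hinj', hf0', hfD', hadjcons', hfst', hconv'⟩ :=
        ih (k - 1) (by omega) a (D.erase a) (by rw [Finset.card_erase_of_mem haD, hcard])
          (Finset.notMem_erase a D)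
          (Finset.card_pos.1 (by rw [Finset.card_erase_of_mem haD, hcard]; omega))
          hclosed' hcompl'
      have hkk : k - 1 + 1 = k := by omega
      set g : Fin (k + 1) → V :=
        fun i => if h : i.val = 0 then y else f' ⟨i.val - 1, by omega⟩ with hg
      have hgD : ∀ i : Fin (k + 1), i ≠ 0 → g i ∈ D := by
        intro i hi
        have hi' : i.val ≠ 0 := fun h => hi (Fin.ext h)
        rw [hg]
        simp only [hi', dif_neg]
        by_cases h0 : (⟨i.val - 1, by omega⟩ : Fin (k - 1 + 1)) = 0
        · rw [h0, hf0']
          exact haD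
        · exact Finset.mem_of_mem_erase (hfD' _ h0)
      have hg1 : ∀ (h1 : 1 < k + 1), g ⟨1, h1⟩ = a := by
        intro h1
        rw [hg]
        simp only [dif_neg]
        exact hf0'
      refine ⟨g, ?_, by simp [hg], hgD, ?_, ?_, ?_⟩
      · -- injectivity
        intro i j hij
        by_cases hi : i.val = 0 <;> by_cases hj : j.val = 0
        · exact Fin.ext (by omega)
        · exfalso
          rw [hg] at hij
          simp only [hi, hj, dif_pos, dif_neg] at hij
          have : g j ∈ D := hgD j (fun h => hj (by rw [h]; rfl))
          rw [hg] at this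
          simp only [hj, dif_neg] at this
          exact hyD (hij ▸ this)
        · exfalso
          rw [hg] at hij
          simp only [hi, hj, dif_pos, dif_neg] at hij
          have : g i ∈ D := hgD i (fun h => hi (by rw [h]; rfl))
          rw [hg] at this
          simp only [hi, dif_neg] at this
          exact hyD (hij ▸ this)
        · rw [hg] at hij
          simp only [hi, hj, dif_neg] at hij
          have := hinj' hij
          rw [Fin.mk.injEq] at this
          exact Fin.ext (by omega)
      · -- consecutive adjacency
        intro i h
        by_cases hi : i = 0
        · subst hi
          have : g ⟨1, h⟩ = a := hg1 h
          rw [this]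
          simpa [hg] using hadj
        · have h' : (i - 1) + 1 < k - 1 + 1 := by omega
          have hadj2 := hadjcons' (i - 1) h'
          have e1 : g ⟨i, by omega⟩ = f' ⟨i - 1, by omega⟩ := by
            rw [hg]; simp [hi]
          have e2 : g ⟨i + 1, h⟩ = f' ⟨i - 1 + 1, h'⟩ := by
            rw [hg]
            simp only []
            rw [dif_neg (by simp : ¬ ((⟨i + 1, h⟩ : Fin (k+1)) : ℕ) = 0)]
            congr 1
            exact Fin.ext (by simp; omega)
          rw [e1, e2]
          exact hadj2
      · -- unique neighbor of y
        intro d hd hadjyd h1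
        rw [hg1 h1]
        exact huniq d hd hadjyd
      · -- converse adjacency
        intro i j hi hadj'
        have hi' : i.val ≠ 0 := fun h => hi (Fin.ext h)
        by_cases hj : j.val = 0
        · -- adjacency to y
          right
          have hgi : g i ∈ D := hgD i hi
          have hgj : g j = y := by rw [hg]; simp [hj]
          rw [hgj] at hadj'
          have := huniq (g i) hgi hadj'.symm
          have h1 : (1 : ℕ) < k + 1 := by omega
          have hga : g ⟨1, h1⟩ = a := hg1 h1
          have : g i = g ⟨1, h1⟩ := by rw [hga, this]
          have hii : i = ⟨1, h1⟩ := by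
            by_contra hne
            exact hne (by
              have hinj : Function.Injective g := by
                intro i' j' hij'
                by_cases hi2 : i'.val = 0 <;> by_cases hj2 : j'.val = 0
                · exact Fin.ext (by omega)
                · exfalso
                  have hm : g j' ∈ D := hgD j' (fun h => hj2 (by rw [h]; rfl))
                  rw [hg] at hij'
                  simp only [hi2, dif_pos] at hij'
                  exact hyD (hij' ▸ hm)
                · exfalso
                  have hm : g i' ∈ D := hgD i' (fun h => hi2 (by rw [h]; rfl))
                  rw [hg] at hij'
                  simp only [hj2, dif_pos] at hij'
                  exact hyD (hij'.symm ▸ hm)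
                · rw [hg] at hij'
                  simp only [hi2, hj2, dif_neg] at hij'
                  have := hinj' hij'
                  rw [Fin.mk.injEq] at this
                  exact Fin.ext (by omega)
              exact hinj this)
          have hival : i.val = 1 := by rw [Fin.ext_iff] at hii; simpa using hii
          omega
        · -- both at least 1
          have hj' : j.val ≠ 0 := hj
          rw [hg] at hadj'
          simp only [hi', hj', dif_neg] at hadj'
          by_cases hi1 : i.val = 1
          · -- g i = a
            have : (⟨i.val - 1, by omega⟩ : Fin (k - 1 + 1)) = 0 := by
              rw [Fin.ext_iff]; simp; omega
            rw [this, hf0'] at hadj'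
            by_cases hj1 : j.val = 1
            · exfalso
              have : (⟨j.val - 1, by omega⟩ : Fin (k - 1 + 1)) = 0 := by
                rw [Fin.ext_iff]; simp; omega
              rw [this, hf0'] at hadj'
              exact hadj'.ne rfl
            · have hmem : f' ⟨j.val - 1, by omega⟩ ∈ D.erase a := by
                refine hfD' _ ?_
                intro hcon
                rw [Fin.ext_iff] at hcon; simp at hcon; omega
              have h1' : (1 : ℕ) < k - 1 + 1 := by omega
              have := hfst' _ hmem hadj' h1'
              have hji : (⟨j.val - 1, by omega⟩ : Fin (k - 1 + 1)) = ⟨1, h1'⟩ :=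
                hinj' this
              rw [Fin.mk.injEq] at hji
              left; omega
          · -- i ≥ 2 on the f' side
            have hne0 : (⟨i.val - 1, by omega⟩ : Fin (k - 1 + 1)) ≠ 0 := by
              intro hcon
              rw [Fin.ext_iff] at hcon; simp at hcon; omega
            have := hconv' _ _ hne0 hadj'
            simp only at this
            rcases this with h | h
            · left; omega
            · right; omega
end Chain

end RCurv

open RCurv in
/-- A resistance nonnegative connected graph with a cut vertex is a path graph. -/
theorem isRN_with_cutVertex_is_path {V : Type*} [Fintype V] [DecidableEq V]
    (G : SimpleGraph V) (hG : G.Connected) (hRN : IsRN G)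
    (x : V) (hx : ¬ (G.induce ({x}ᶜ : Set V)).Connected) :
    Nonempty (G ≃g SimpleGraph.pathGraph (Fintype.card V)) := by
  classical
  obtain ⟨c, hc, hcurv⟩ := hRN
  by_cases hsing : ∀ v : V, v = x
  · -- one-vertex case
    have h1 : Fintype.card V = 1 := Fintype.card_eq_one_iff.2 ⟨x, fun y => hsing y⟩
    rw [h1]
    refine ⟨⟨Fintype.equivFinOfCardEq h1, ?_⟩⟩
    intro a b
    simp only [SimpleGraph.pathGraph_adj]
    constructor
    · intro h
      exfalso
      rcases h with h | h <;> omega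
    · intro h
      exact absurd ((hsing a).trans (hsing b).symm) h.ne
  · push_neg at hsing
    obtain ⟨z0, hz0⟩ := hsing
    have hSne : Nonempty ({x}ᶜ : Set V) := ⟨⟨z0, hz0⟩⟩
    rw [SimpleGraph.connected_iff] at hx
    push_neg at hx
    have hnp : ¬ (G.induce ({x}ᶜ : Set V)).Preconnected := fun h => (hx h).elim hSne.some
    rw [SimpleGraph.Preconnected] at hnp
    push_neg at hnp
    obtain ⟨u, w, huw⟩ := hnp
    -- the two sides
    set A : Finset V := Finset.univ.filter
      (fun v => ∃ (h : v ∈ ({x}ᶜ : Set V)), (G.induce ({x}ᶜ : Set V)).Reachable u ⟨v, h⟩)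
      with hA
    set B : Finset V := Finset.univ.filter (fun v => v ≠ x ∧ v ∉ A) with hB
    have hxA : x ∉ A := by
      rw [hA, Finset.mem_filter]
      rintro ⟨-, h, -⟩
      exact h rfl
    have hxB : x ∉ B := by
      rw [hB, Finset.mem_filter]
      rintro ⟨-, h, -⟩
      exact h rfl
    have hdisj : Disjoint A B := by
      rw [Finset.disjoint_left]
      intro v hvA hvB
      rw [hB, Finset.mem_filter] at hvB
      exact hvB.2.2 hvA
    have hcover : ∀ v : V, v = x ∨ v ∈ A ∨ v ∈ B := by
      intro v
      by_cases h1 : v = x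
      · exact Or.inl h1
      · by_cases h2 : v ∈ A
        · exact Or.inr (Or.inl h2)
        · exact Or.inr (Or.inr (by rw [hB, Finset.mem_filter]; exact ⟨Finset.mem_univ _, h1, h2⟩))
    have hmemA : ∀ v : V, v ∈ A → v ≠ x := by
      intro v hv
      rw [hA, Finset.mem_filter] at hv
      obtain ⟨-, h, -⟩ := hv
      exact h
    have hclosedA : ∀ d ∈ A, ∀ v : V, G.Adj d v → v = x ∨ v ∈ A := by
      intro d hd v hadj
      by_cases hvx : v = x
      · exact Or.inl hvx
      · right
        rw [hA, Finset.mem_filter] at hd ⊢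
        obtain ⟨-, hdx, hreach⟩ := hd
        refine ⟨Finset.mem_univ _, hvx, hreach.trans (SimpleGraph.Adj.reachable ?_)⟩
        exact (SimpleGraph.comap_adj).2 (by simpa using hadj)
    have hclosedB : ∀ d ∈ B, ∀ v : V, G.Adj d v → v = x ∨ v ∈ B := by
      intro d hd v hadj
      by_cases hvx : v = x
      · exact Or.inl hvx
      · right
        rw [hB, Finset.mem_filter] at hd ⊢
        refine ⟨Finset.mem_univ _, hvx, ?_⟩
        intro hvA
        rcases hclosedA v hvA d hadj.symm with rfl | hdA
        · exact hd.2.1 rfl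
        · exact hd.2.2 hdA
    have huA : (u : V) ∈ A := by
      rw [hA, Finset.mem_filter]
      exact ⟨Finset.mem_univ _, u.prop, by rw [Subtype.coe_eta]⟩
    have hwx : (w : V) ≠ x := w.prop
    have hwB : (w : V) ∈ B := by
      rw [hB, Finset.mem_filter]
      refine ⟨Finset.mem_univ _, hwx, ?_⟩
      intro hwA
      rw [hA, Finset.mem_filter] at hwA
      obtain ⟨-, h, hreach⟩ := hwA
      exact huw (by convert hreach using 2)
    have hAne : A.Nonempty := ⟨u, huA⟩
    have hBne : B.Nonempty := ⟨w, hwB⟩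
    set kA := A.card with hkA
    set kB := B.card with hkB
    -- apply the chain construction on both sides
    obtain ⟨f, hfinj, hf0, hfA, hfcons, hffst, hfconv⟩ :=
      chain hG hc hcurv kA x A hkA.symm hxA hAne hclosedA
        ⟨w, by
          rw [Finset.mem_compl, Finset.mem_insert]
          push_neg
          exact ⟨hwx, fun h => (Finset.disjoint_right.1 hdisj) hwB h⟩⟩
    obtain ⟨g, hginj, hg0, hgB, hgcons, hgfst, hgconv⟩ :=
      chain hG hc hcurv kB x B hkB.symm hxB hBne hclosedB
        ⟨u, by
          rw [Finset.mem_compl, Finset.mem_insert]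
          push_neg
          exact ⟨hmemA u huA, fun h => (Finset.disjoint_left.1 hdisj) huA h⟩⟩
    have hkA1 : 1 ≤ kA := Finset.card_pos.2 hAne
    have hkB1 : 1 ≤ kB := Finset.card_pos.2 hBne
    have hn : Fintype.card V = kA + 1 + kB := by
      have hins : insert x (A ∪ B) = Finset.univ := by
        ext v
        simp only [Finset.mem_insert, Finset.mem_union, Finset.mem_univ, iff_true]
        rcases hcover v with h | h | h <;> tauto
      have hxAB : x ∉ A ∪ B := by
        rw [Finset.mem_union]; rintro (h | h); exacts [hxA h, hxB h]
      have h1 : (insert x (A ∪ B)).card = (A ∪ B).card + 1 :=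
        Finset.card_insert_of_notMem hxAB
      rw [hins, Finset.card_univ] at h1
      rw [Finset.card_union_of_disjoint hdisj] at h1
      omega
    rw [hn]
    set n := kA + 1 + kB with hndef
    set F : Fin n → V := fun i =>
      if h : i.val < kA + 1 then f ⟨kA - i.val, by omega⟩ else g ⟨i.val - kA, by omega⟩
      with hF
    -- basic values
    have hFf : ∀ (i : Fin n) (h : i.val < kA + 1), F i = f ⟨kA - i.val, by omega⟩ := by
      intro i h; rw [hF]; exact dif_pos h
    have hFg : ∀ (i : Fin n) (h : ¬ i.val < kA + 1), F i = g ⟨i.val - kA, by omega⟩ := by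
      intro i h; rw [hF]; exact dif_neg h
    have hFmidA : ∀ (i : Fin n), i.val < kA → F i ∈ A := by
      intro i h
      rw [hFf i (by omega)]
      refine hfA _ ?_
      intro hcon
      rw [Fin.ext_iff] at hcon
      simp at hcon
      omega
    have hFmidB : ∀ (i : Fin n), kA < i.val → F i ∈ B := by
      intro i h
      rw [hFg i (by omega)]
      refine hgB _ ?_
      intro hcon
      rw [Fin.ext_iff] at hcon
      simp at hcon
      omega
    -- injectivity
    have hFinj : Function.Injective F := by
      intro i j hij
      by_cases hi : i.val < kA + 1 <;> by_cases hj : j.val < kA + 1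
      · rw [hFf i hi, hFf j hj] at hij
        have := hfinj hij
        rw [Fin.mk.injEq] at this
        exact Fin.ext (by omega)
      · exfalso
        rw [hFf i hi, hFg j hj] at hij
        have hjB : g ⟨j.val - kA, by omega⟩ ∈ B := by
          refine hgB _ ?_
          intro hcon
          rw [Fin.ext_iff] at hcon; simp at hcon; omega
        rw [← hij] at hjB
        by_cases hik : i.val = kA
        · have : (⟨kA - i.val, by omega⟩ : Fin (kA + 1)) = 0 := by
            rw [Fin.ext_iff]; simp; omega
          rw [this, hf0] at hjB
          exact hxB hjB
        · have : f ⟨kA - i.val, by omega⟩ ∈ A := by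
            refine hfA _ ?_
            intro hcon
            rw [Fin.ext_iff] at hcon; simp at hcon; omega
          exact (Finset.disjoint_left.1 hdisj) this hjB
      · exfalso
        rw [hFg i hi, hFf j hj] at hij
        have hiB : g ⟨i.val - kA, by omega⟩ ∈ B := by
          refine hgB _ ?_
          intro hcon
          rw [Fin.ext_iff] at hcon; simp at hcon; omega
        rw [hij] at hiB
        by_cases hjk : j.val = kA
        · have : (⟨kA - j.val, by omega⟩ : Fin (kA + 1)) = 0 := by
            rw [Fin.ext_iff]; simp; omega
          rw [this, hf0] at hiB
          exact hxB hiB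
        · have : f ⟨kA - j.val, by omega⟩ ∈ A := by
            refine hfA _ ?_
            intro hcon
            rw [Fin.ext_iff] at hcon; simp at hcon; omega
          exact (Finset.disjoint_left.1 hdisj) this hiB
      · rw [hFg i hi, hFg j hj] at hij
        have := hginj hij
        rw [Fin.mk.injEq] at this
        exact Fin.ext (by omega)
    have hFbij : Function.Bijective F := by
      rw [Fintype.bijective_iff_injective_and_card]
      refine ⟨hFinj, ?_⟩
      rw [Fintype.card_fin]
      omega
    -- adjacency characterization
    have hABadj : ∀ a ∈ A, ∀ b ∈ B, ¬ G.Adj a b := by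
      intro a ha b hb hadj
      rcases hclosedA a ha b hadj with rfl | hbA
      · exact hxB hb
      · exact (Finset.disjoint_left.1 hdisj) hbA hb
    have hadj_iff : ∀ i j : Fin n, G.Adj (F i) (F j) ↔ (i.val + 1 = j.val ∨ j.val + 1 = i.val) := by
      have forward : ∀ i j : Fin n, i.val < j.val → G.Adj (F i) (F j) → i.val + 1 = j.val := by
        intro i j hlt hadj
        by_cases hi : i.val < kA + 1 <;> by_cases hj : j.val < kA + 1
        · -- both on f side; p = kA - i > q = kA - j
          rw [hFf i hi, hFf j hj] at hadj
          by_cases hq0 : j.val = kA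
          · -- F j = x
            have hq : (⟨kA - j.val, by omega⟩ : Fin (kA + 1)) = 0 := by
              rw [Fin.ext_iff]; simp; omega
            rw [hq, hf0] at hadj
            have hpA : f ⟨kA - i.val, by omega⟩ ∈ A := by
              refine hfA _ ?_
              intro hcon; rw [Fin.ext_iff] at hcon; simp at hcon; omega
            have h1 : (1 : ℕ) < kA + 1 := by omega
            have := hffst _ hpA hadj.symm h1
            have heq2 : (⟨kA - i.val, by omega⟩ : Fin (kA + 1)) = ⟨1, h1⟩ := hfinj this
            rw [Fin.mk.injEq] at heq2
            omega
          · -- both strictly inside A side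
            have hpne : (⟨kA - i.val, by omega⟩ : Fin (kA + 1)) ≠ 0 := by
              intro hcon; rw [Fin.ext_iff] at hcon; simp at hcon; omega
            have := hfconv _ _ hpne hadj
            simp only at this
            omega
        · by_cases hik : i.val = kA
          · -- F i = x, F j on g side
            have hp : (⟨kA - i.val, by omega⟩ : Fin (kA + 1)) = 0 := by
              rw [Fin.ext_iff]; simp; omega
            rw [hFf i hi, hp, hf0] at hadj
            rw [hFg j hj] at hadj
            have hqB : g ⟨j.val - kA, by omega⟩ ∈ B := by
              refine hgB _ ?_
              intro hcon; rw [Fin.ext_iff] at hcon; simp at hcon; omega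
            have h1 : (1 : ℕ) < kB + 1 := by omega
            have := hgfst _ hqB hadj h1
            have heq2 : (⟨j.val - kA, by omega⟩ : Fin (kB + 1)) = ⟨1, h1⟩ := hginj this
            rw [Fin.mk.injEq] at heq2
            omega
          · -- F i in A, F j in B : impossible
            exfalso
            exact hABadj _ (hFmidA i (by omega)) _ (hFmidB j (by omega)) hadj
        · omega
        · -- both on g side
          rw [hFg i hi, hFg j hj] at hadj
          have hpne : (⟨i.val - kA, by omega⟩ : Fin (kB + 1)) ≠ 0 := by
            intro hcon; rw [Fin.ext_iff] at hcon; simp at hcon; omega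
          have := hgconv _ _ hpne hadj
          simp only at this
          omega
      intro i j
      constructor
      · intro hadj
        rcases Nat.lt_trichotomy i.val j.val with hlt | heq | hlt
        · exact Or.inl (forward i j hlt hadj)
        · exfalso; exact hadj.ne (congrArg F (Fin.ext heq))
        · exact Or.inr (forward j i hlt hadj.symm)
      · intro hcons
        -- consecutive indices are adjacent
        have key : ∀ i j : Fin n, i.val + 1 = j.val → G.Adj (F i) (F j) := by
          intro i j hij
          by_cases hj : j.val < kA + 1
          · -- both f side
            rw [hFf i (by omega), hFf j hj]
            have h' : (kA - j.val) + 1 < kA + 1 := by omega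
            have := hfcons (kA - j.val) h'
            have e1 : (⟨kA - j.val + 1, h'⟩ : Fin (kA + 1)) = ⟨kA - i.val, by omega⟩ := by
              rw [Fin.ext_iff]; simp; omega
            rw [e1] at this
            exact this.symm
          · by_cases hi : i.val < kA + 1
            · -- i = kA, j = kA + 1
              have hik : i.val = kA := by omega
              have hp : (⟨kA - i.val, by omega⟩ : Fin (kA + 1)) = 0 := by
                rw [Fin.ext_iff]; simp; omega
              rw [hFf i hi, hp, hf0, hFg j hj]
              have h' : (0 : ℕ) + 1 < kB + 1 := by omega
              have := hgcons 0 h'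
              simp only [Fin.mk_zero] at this
              rw [hg0] at this
              have e1 : (⟨0 + 1, h'⟩ : Fin (kB + 1)) = ⟨j.val - kA, by omega⟩ := by
                rw [Fin.ext_iff]; simp; omega
              rw [e1] at this
              exact this
            · -- both g side
              rw [hFg i hi, hFg j hj]
              have h' : (i.val - kA) + 1 < kB + 1 := by omega
              have := hgcons (i.val - kA) h'
              have e1 : (⟨i.val - kA + 1, h'⟩ : Fin (kB + 1)) = ⟨j.val - kA, by omega⟩ := by
                rw [Fin.ext_iff]; simp; omega
              rw [e1] at this
              exact this
        rcases hcons with h | h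
        · exact key i j h
        · exact (key j i h).symm
    -- build the isomorphism
    refine ⟨(SimpleGraph.Iso.symm ⟨Equiv.ofBijective F hFbij, ?_⟩ : G ≃g _)⟩
    intro i j
    rw [SimpleGraph.pathGraph_adj]
    exact hadj_iff i j
end
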